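/- arXiv:2206.15215 — 5 statements merged into one kernel-verified Lean document; each statement's English description precedes it below -/
import Mathlib

section
/- There exists a constant L₈ > 0, depending only on B, L, T, σ and M_ε, such that E[Err] ≤ L₈ · sqrt(Σ_{i=1}^m (t_{i+1} − t_i)²), where Err := sup over x ∈ X(B,L,T) of |Σ_{i=1}^m (t_{i+1} − t_i)·(y_i² − x*(t_i)² − σ² − 2·x(t_i)·(y_i − x*(t_i)))|. -/
open Real Set MeasureTheory ProbabilityTheory

/-- The class `X(B,L,T)` of functions `[0,T] → ℝ` that are bounded by `B` and
Lipschitz with constant `L` on `[0,T]`. -/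
def boundedLipschitzClass (B L T : ℝ) : Set (ℝ → ℝ) :=
  {x | (∀ t ∈ Set.Icc (0 : ℝ) T, |x t| ≤ B) ∧
    ∀ s ∈ Set.Icc (0 : ℝ) T, ∀ t ∈ Set.Icc (0 : ℝ) T, |x t - x s| ≤ L * |t - s|}

lemma my_integrable_of_ae_bound {Ω : Type} [MeasurableSpace Ω] {μ : Measure Ω}
    [IsFiniteMeasure μ] {f : Ω → ℝ} {C : ℝ} (hf : Measurable f)
    (hb : ∀ᵐ ω ∂μ, |f ω| ≤ C) : Integrable f μ :=
  (integrable_const C).mono' hf.aestronglyMeasurable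
    (hb.mono fun ω h => by simpa [Real.norm_eq_abs] using h)

lemma my_abs_integral_le_sqrt {Ω : Type} [MeasurableSpace Ω] {μ : Measure Ω}
    [IsProbabilityMeasure μ] {Z : Ω → ℝ} {C : ℝ} (hZ : Measurable Z)
    (hb : ∀ᵐ ω ∂μ, |Z ω| ≤ C) :
    ∫ ω, |Z ω| ∂μ ≤ Real.sqrt (∫ ω, (Z ω) ^ 2 ∂μ) := by
  have hmem : MemLp (fun ω => |Z ω|) 2 μ :=
    MemLp.of_bound hZ.abs.aestronglyMeasurable C
      (hb.mono fun ω h => by simpa [Real.norm_eq_abs, abs_abs] using h)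
  have hv := variance_nonneg (fun ω => |Z ω|) μ
  rw [variance_eq_sub hmem] at hv
  have heq : (∫ ω, ((fun ω => |Z ω|) ^ 2) ω ∂μ) = ∫ ω, (Z ω) ^ 2 ∂μ := by
    simp [Pi.pow_apply, sq_abs]
  have h1 : (∫ ω, |Z ω| ∂μ) ^ 2 ≤ ∫ ω, (Z ω) ^ 2 ∂μ := by
    rw [← heq]; simpa using hv
  have h0 : 0 ≤ ∫ ω, |Z ω| ∂μ := integral_nonneg fun ω => abs_nonneg _
  have h2 : 0 ≤ ∫ ω, (Z ω) ^ 2 ∂μ := integral_nonneg fun ω => sq_nonneg _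
  exact (Real.le_sqrt h0 h2).mpr h1

lemma my_abel (c u : ℕ → ℝ) : ∀ m : ℕ,
    ∑ i ∈ Finset.Icc 1 (m + 1), c i * u i
      = (∑ i ∈ Finset.Icc 1 m, (c i - c (i + 1)) * (∑ j ∈ Finset.Icc 1 i, u j))
        + c (m + 1) * ∑ j ∈ Finset.Icc 1 (m + 1), u j := by
  intro m
  induction m with
  | zero => simp
  | succ k ih =>
    rw [Finset.sum_Icc_succ_top (by omega : 1 ≤ k + 1 + 1) (fun i => c i * u i),
      Finset.sum_Icc_succ_top (by omega : 1 ≤ k + 1) (fun i => (c i - c (i + 1)) * _),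
      Finset.sum_Icc_succ_top (by omega : 1 ≤ k + 1 + 1) u, ih]
    ring

lemma my_telescope (t : ℕ → ℝ) : ∀ m : ℕ,
    ∑ i ∈ Finset.Icc 1 m, (t (i + 1) - t i) = t (m + 1) - t 1 := by
  intro m
  induction m with
  | zero => simp
  | succ k ih => rw [Finset.sum_Icc_succ_top (by omega : 1 ≤ k + 1), ih]; ring

/-- **Dudley bound (Proposition).** There is a constant `L₈` depending only on
`B, L, T, σ, M_ε` such that the expected uniform deviation `E[Err]` between the
empirical loss and its expectation, over the class of bounded Lipschitz
trajectories, is at most `L₈ · sqrt(Σᵢ (t_{i+1} − t_i)²)`. -/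
theorem expected_sup_deviation_bound
    (B L T σ Mε : ℝ) (hB : 0 < B) (hL : 0 < L) (hT : 0 < T) (hσ : 0 < σ) (hMε : 0 < Mε) :
    ∃ L₈ > (0 : ℝ),
      ∀ (Ω : Type) (_ : MeasurableSpace Ω) (μ : Measure Ω) (_ : IsProbabilityMeasure μ)
        (m : ℕ) (_ : 1 ≤ m) (t : ℕ → ℝ)
        (_ : t 1 = 0)
        (_ : ∀ i, 1 ≤ i → i < m → t i < t (i + 1))
        (_ : t m ≤ T) (_ : t (m + 1) = T)
        (xstar : ℝ → ℝ) (_ : xstar ∈ boundedLipschitzClass B L T)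
        (ε : ℕ → Ω → ℝ)
        (_ : ∀ i ∈ Finset.Icc 1 m, Measurable (ε i))
        (_ : iIndepFun (fun i : Fin m => ε (i + 1)) μ)
        (_ : ∀ i ∈ Finset.Icc 1 m, ∫ ω, ε i ω ∂μ = 0)
        (_ : ∀ i ∈ Finset.Icc 1 m, ∫ ω, (ε i ω) ^ 2 ∂μ = σ ^ 2)
        (_ : ∀ i ∈ Finset.Icc 1 m, ∀ᵐ ω ∂μ, |ε i ω| ≤ Mε),
        -- `y i = xstar (t i) + ε i` and
        -- `Err ω = sup over x ∈ X(B,L,T) of |Σᵢ (t_{i+1}−t_i)(yᵢ² − x*(tᵢ)² − σ² − 2·x(tᵢ)(yᵢ − x*(tᵢ)))|`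
        (∫ ω, sSup {v : ℝ | ∃ x ∈ boundedLipschitzClass B L T,
            v = |∑ i ∈ Finset.Icc 1 m, (t (i + 1) - t i) *
              ((xstar (t i) + ε i ω) ^ 2 - (xstar (t i)) ^ 2 - σ ^ 2 -
                2 * x (t i) * ((xstar (t i) + ε i ω) - xstar (t i)))|} ∂μ)
          ≤ L₈ * Real.sqrt (∑ i ∈ Finset.Icc 1 m, (t (i + 1) - t i) ^ 2) := by
  refine ⟨Mε ^ 2 + 4 * B * σ + 4 * L * T * σ, by positivity, ?_⟩
  intro Ω _ μ _ m hm t ht1 hinc htm htm1 xstar hxstar ε hmeas hIndep hmean hvar hbound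
  obtain ⟨k, rfl⟩ : ∃ k, m = k + 1 := ⟨m - 1, by omega⟩
  classical
  -- abbreviations
  set Δ : ℕ → ℝ := fun i => t (i + 1) - t i with hΔdef
  set Z : ℕ → Ω → ℝ := fun i ω => (ε i ω) ^ 2 - σ ^ 2 with hZdef
  set Sp : ℕ → Ω → ℝ := fun j ω => ∑ i ∈ Finset.Icc 1 j, Δ i * ε i ω with hSpdef
  set A : Ω → ℝ := fun ω => ∑ i ∈ Finset.Icc 1 (k + 1), Δ i * Z i ω with hAdef
  set S : ℝ := Real.sqrt (∑ i ∈ Finset.Icc 1 (k + 1), Δ i ^ 2) with hSdef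
  have hS0 : 0 ≤ S := Real.sqrt_nonneg _
  -- monotonicity of t
  have hle : ∀ i j, 1 ≤ i → i ≤ j → j ≤ k + 1 → t i ≤ t j := by
    intro i j hi hij hjm
    induction j with
    | zero => omega
    | succ n ih =>
      rcases Nat.lt_or_ge i (n + 1) with h | h
      · exact (ih (by omega) (by omega)).trans
          (le_of_lt (hinc n (by omega) (by omega)))
      · have : i = n + 1 := by omega
        subst this; exact le_rfl
  have hΔnn : ∀ i, 1 ≤ i → i ≤ k + 1 → 0 ≤ Δ i := by
    intro i h1 h2
    rcases Nat.lt_or_ge i (k + 1) with h | h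
    · exact sub_nonneg.mpr (hinc i h1 h).le
    · have hik : i = k + 1 := by omega
      subst hik
      show (0 : ℝ) ≤ t (k + 1 + 1) - t (k + 1)
      rw [htm1]; linarith [htm]
  have htmem : ∀ i, 1 ≤ i → i ≤ k + 2 → t i ∈ Set.Icc (0 : ℝ) T := by
    intro i h1 h2
    rcases Nat.lt_or_ge i (k + 2) with h | h
    · constructor
      · calc (0 : ℝ) = t 1 := ht1.symm
          _ ≤ t i := hle 1 i le_rfl h1 (by omega)
      · exact (hle i (k + 1) h1 (by omega) le_rfl).trans htm
    · have : i = k + 2 := by omega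
      subst this
      have : t (k + 2) = T := htm1
      rw [this]; exact ⟨hT.le, le_rfl⟩
  -- basic integrability
  have hεint : ∀ i ∈ Finset.Icc 1 (k + 1), Integrable (ε i) μ := fun i hi =>
    my_integrable_of_ae_bound (hmeas i hi) (hbound i hi)
  have hsqb : ∀ i ∈ Finset.Icc 1 (k + 1), ∀ᵐ ω ∂μ, |(ε i ω) ^ 2| ≤ Mε ^ 2 := fun i hi =>
    (hbound i hi).mono fun ω h => by
      rw [abs_of_nonneg (sq_nonneg _)]
      have h' := abs_le.mp h
      nlinarith [h'.1, h'.2]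
  have hsqint : ∀ i ∈ Finset.Icc 1 (k + 1), Integrable (fun ω => (ε i ω) ^ 2) μ :=
    fun i hi => my_integrable_of_ae_bound ((hmeas i hi).pow_const 2) (hsqb i hi)
  have hσM : σ ^ 2 ≤ Mε ^ 2 := by
    have h1 : (1 : ℕ) ∈ Finset.Icc 1 (k + 1) := by simp
    rw [← hvar 1 h1]
    calc ∫ ω, (ε 1 ω) ^ 2 ∂μ ≤ ∫ _ω, Mε ^ 2 ∂μ := by
          apply integral_mono_ae (hsqint 1 h1) (integrable_const _)
          exact (hsqb 1 h1).mono fun ω h => (le_abs_self _).trans h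
      _ = Mε ^ 2 := by simp
  have hZb : ∀ i ∈ Finset.Icc 1 (k + 1), ∀ᵐ ω ∂μ, |Z i ω| ≤ Mε ^ 2 := fun i hi =>
    (hbound i hi).mono fun ω h => by
      have h' := abs_le.mp h
      have h2 : (ε i ω) ^ 2 ≤ Mε ^ 2 := by nlinarith [h'.1, h'.2]
      have h3 : 0 ≤ (ε i ω) ^ 2 := sq_nonneg _
      have : |Z i ω| = |(ε i ω) ^ 2 - σ ^ 2| := rfl
      rw [this, abs_le]
      constructor <;> nlinarith [sq_nonneg σ, hσM]
  have hZmeas : ∀ i ∈ Finset.Icc 1 (k + 1), Measurable (Z i) := fun i hi =>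
    ((hmeas i hi).pow_const 2).sub measurable_const
  have hZint : ∀ i ∈ Finset.Icc 1 (k + 1), Integrable (Z i) μ := fun i hi =>
    my_integrable_of_ae_bound (hZmeas i hi) (hZb i hi)
  have hZmean : ∀ i ∈ Finset.Icc 1 (k + 1), ∫ ω, Z i ω ∂μ = 0 := by
    intro i hi
    have : ∫ ω, Z i ω ∂μ = (∫ ω, (ε i ω) ^ 2 ∂μ) - ∫ _ω, σ ^ 2 ∂μ :=
      integral_sub (hsqint i hi) (integrable_const _)
    rw [this, hvar i hi]; simp
  -- independence
  have hIndepEps : ∀ i ∈ Finset.Icc 1 (k + 1), ∀ j ∈ Finset.Icc 1 (k + 1), i ≠ j →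
      IndepFun (ε i) (ε j) μ := by
    intro i hi j hj hij
    simp only [Finset.mem_Icc] at hi hj
    have h := hIndep.indepFun (i := (⟨i - 1, by omega⟩ : Fin (k + 1)))
      (j := (⟨j - 1, by omega⟩ : Fin (k + 1)))
      (by simp only [ne_eq, Fin.mk.injEq]; omega)
    simpa only [Nat.sub_add_cancel hi.1, Nat.sub_add_cancel hj.1] using h
  have hprodint : ∀ i ∈ Finset.Icc 1 (k + 1), ∀ j ∈ Finset.Icc 1 (k + 1),
      Integrable (fun ω => ε i ω * ε j ω) μ := fun i hi j hj =>
    my_integrable_of_ae_bound ((hmeas i hi).mul (hmeas j hj))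
      (by filter_upwards [hbound i hi, hbound j hj] with ω h1 h2
          calc |ε i ω * ε j ω| = |ε i ω| * |ε j ω| := abs_mul _ _
            _ ≤ Mε * Mε := mul_le_mul h1 h2 (abs_nonneg _) hMε.le)
  have hmean0 : ∀ i ∈ Finset.Icc 1 (k + 1), ∀ j ∈ Finset.Icc 1 (k + 1), i ≠ j →
      ∫ ω, ε i ω * ε j ω ∂μ = 0 := by
    intro i hi j hj hij
    have h := (hIndepEps i hi j hj hij).integral_fun_mul_eq_mul_integral
      (hεint i hi).aestronglyMeasurable (hεint j hj).aestronglyMeasurable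
    have h2 : ∫ ω, ε i ω * ε j ω ∂μ = (∫ ω, ε i ω ∂μ) * ∫ ω, ε j ω ∂μ := h
    rw [h2, hmean i hi, hmean j hj]; ring
  have hZprodint : ∀ i ∈ Finset.Icc 1 (k + 1), ∀ j ∈ Finset.Icc 1 (k + 1),
      Integrable (fun ω => Z i ω * Z j ω) μ := fun i hi j hj =>
    my_integrable_of_ae_bound ((hZmeas i hi).mul (hZmeas j hj))
      (by filter_upwards [hZb i hi, hZb j hj] with ω h1 h2
          calc |Z i ω * Z j ω| = |Z i ω| * |Z j ω| := abs_mul _ _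
            _ ≤ Mε ^ 2 * Mε ^ 2 := mul_le_mul h1 h2 (abs_nonneg _) (by positivity))
  have hZprod0 : ∀ i ∈ Finset.Icc 1 (k + 1), ∀ j ∈ Finset.Icc 1 (k + 1), i ≠ j →
      ∫ ω, Z i ω * Z j ω ∂μ = 0 := by
    intro i hi j hj hij
    have hφ : Measurable (fun z : ℝ => z ^ 2 - σ ^ 2) :=
      (measurable_id.pow_const 2).sub measurable_const
    have hind : IndepFun (Z i) (Z j) μ := (hIndepEps i hi j hj hij).comp hφ hφ
    have h := hind.integral_fun_mul_eq_mul_integral (hZint i hi).aestronglyMeasurable (hZint j hj).aestronglyMeasurable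
    have h2 : ∫ ω, Z i ω * Z j ω ∂μ = (∫ ω, Z i ω ∂μ) * ∫ ω, Z j ω ∂μ := h
    rw [h2, hZmean i hi, hZmean j hj]; ring
  have hZsq : ∀ i ∈ Finset.Icc 1 (k + 1), ∫ ω, Z i ω * Z i ω ∂μ ≤ Mε ^ 4 := by
    intro i hi
    calc ∫ ω, Z i ω * Z i ω ∂μ ≤ ∫ _ω, Mε ^ 4 ∂μ := by
          apply integral_mono_ae (hZprodint i hi i hi) (integrable_const _)
          filter_upwards [hZb i hi] with ω h
          calc Z i ω * Z i ω ≤ |Z i ω * Z i ω| := le_abs_self _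
            _ = |Z i ω| * |Z i ω| := abs_mul _ _
            _ ≤ Mε ^ 2 * Mε ^ 2 := mul_le_mul h h (abs_nonneg _) (by positivity)
            _ = Mε ^ 4 := by ring
      _ = Mε ^ 4 := by simp
  -- second moment of A
  have hAint : Integrable A μ :=
    integrable_finset_sum _ fun i hi => (hZint i hi).const_mul _
  have hAmeas : Measurable A :=
    Finset.measurable_sum _ fun i hi => (measurable_const.mul (hZmeas i hi))
  have hAsq : ∫ ω, (A ω) ^ 2 ∂μ ≤ Mε ^ 4 * ∑ i ∈ Finset.Icc 1 (k + 1), Δ i ^ 2 := by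
    have hexp : ∀ ω, (A ω) ^ 2 = ∑ i ∈ Finset.Icc 1 (k + 1), ∑ j ∈ Finset.Icc 1 (k + 1),
        (Δ i * Δ j) * (Z i ω * Z j ω) := by
      intro ω
      rw [sq]
      show (∑ i ∈ Finset.Icc 1 (k + 1), Δ i * Z i ω) *
        (∑ i ∈ Finset.Icc 1 (k + 1), Δ i * Z i ω) = _
      rw [Finset.sum_mul_sum]
      refine Finset.sum_congr rfl fun i _ => Finset.sum_congr rfl fun j _ => by ring
    calc ∫ ω, (A ω) ^ 2 ∂μ
        = ∑ i ∈ Finset.Icc 1 (k + 1), ∑ j ∈ Finset.Icc 1 (k + 1),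
            (Δ i * Δ j) * ∫ ω, Z i ω * Z j ω ∂μ := by
          simp_rw [hexp]
          rw [integral_finset_sum _ fun i hi => integrable_finset_sum _
            fun j hj => (hZprodint i hi j hj).const_mul _]
          refine Finset.sum_congr rfl fun i hi => ?_
          rw [integral_finset_sum _ fun j hj => (hZprodint i hi j hj).const_mul _]
          exact Finset.sum_congr rfl fun j hj => integral_const_mul _ _
      _ ≤ ∑ i ∈ Finset.Icc 1 (k + 1), Δ i ^ 2 * Mε ^ 4 := by
          apply Finset.sum_le_sum
          intro i hi
          rw [Finset.sum_eq_single_of_mem i hi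
            (fun j hj hji => by rw [hZprod0 i hi j hj (Ne.symm hji)]; ring)]
          calc (Δ i * Δ i) * ∫ ω, Z i ω * Z i ω ∂μ
              ≤ (Δ i * Δ i) * Mε ^ 4 := by
                apply mul_le_mul_of_nonneg_left (hZsq i hi)
                have := hΔnn i (by simpa using (Finset.mem_Icc.mp hi).1)
                  (by simpa using (Finset.mem_Icc.mp hi).2)
                nlinarith
            _ = Δ i ^ 2 * Mε ^ 4 := by ring
      _ = Mε ^ 4 * ∑ i ∈ Finset.Icc 1 (k + 1), Δ i ^ 2 := by
          rw [← Finset.sum_mul, mul_comm]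
  -- second moment of partial sums
  have hsubset : ∀ {j : ℕ}, j ≤ k + 1 → Finset.Icc 1 j ⊆ Finset.Icc 1 (k + 1) :=
    fun hj => Finset.Icc_subset_Icc le_rfl hj
  have hSpint : ∀ j, j ≤ k + 1 → Integrable (Sp j) μ := fun j hj =>
    integrable_finset_sum _ fun i hi => (hεint i (hsubset hj hi)).const_mul _
  have hSpmeas : ∀ j, j ≤ k + 1 → Measurable (Sp j) := fun j hj =>
    Finset.measurable_sum _ fun i hi => measurable_const.mul (hmeas i (hsubset hj hi))
  have hSpsq : ∀ j, j ≤ k + 1 →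
      ∫ ω, (Sp j ω) ^ 2 ∂μ ≤ σ ^ 2 * ∑ i ∈ Finset.Icc 1 (k + 1), Δ i ^ 2 := by
    intro j hj
    have hexp : ∀ ω, (Sp j ω) ^ 2 = ∑ i ∈ Finset.Icc 1 j, ∑ l ∈ Finset.Icc 1 j,
        (Δ i * Δ l) * (ε i ω * ε l ω) := by
      intro ω
      rw [sq]
      show (∑ i ∈ Finset.Icc 1 j, Δ i * ε i ω) * (∑ i ∈ Finset.Icc 1 j, Δ i * ε i ω) = _
      rw [Finset.sum_mul_sum]
      refine Finset.sum_congr rfl fun i _ => Finset.sum_congr rfl fun l _ => by ring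
    calc ∫ ω, (Sp j ω) ^ 2 ∂μ
        = ∑ i ∈ Finset.Icc 1 j, ∑ l ∈ Finset.Icc 1 j,
            (Δ i * Δ l) * ∫ ω, ε i ω * ε l ω ∂μ := by
          simp_rw [hexp]
          rw [integral_finset_sum _ fun i hi => integrable_finset_sum _
            fun l hl => ((hprodint i (hsubset hj hi) l (hsubset hj hl)).const_mul _)]
          refine Finset.sum_congr rfl fun i hi => ?_
          rw [integral_finset_sum _ fun l hl =>
            ((hprodint i (hsubset hj hi) l (hsubset hj hl)).const_mul _)]
          exact Finset.sum_congr rfl fun l hl => integral_const_mul _ _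
      _ = ∑ i ∈ Finset.Icc 1 j, Δ i ^ 2 * σ ^ 2 := by
          refine Finset.sum_congr rfl fun i hi => ?_
          rw [Finset.sum_eq_single_of_mem i hi
            (fun l hl hli => by
              rw [hmean0 i (hsubset hj hi) l (hsubset hj hl) (Ne.symm hli)]; ring)]
          have : ∫ ω, ε i ω * ε i ω ∂μ = σ ^ 2 := by
            rw [← hvar i (hsubset hj hi)]
            exact integral_congr_ae (Filter.Eventually.of_forall fun ω => (sq (ε i ω)).symm)
          rw [this]; ring
      _ ≤ ∑ i ∈ Finset.Icc 1 (k + 1), Δ i ^ 2 * σ ^ 2 := by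
          apply Finset.sum_le_sum_of_subset_of_nonneg (hsubset hj)
          intro i _ _; positivity
      _ = σ ^ 2 * ∑ i ∈ Finset.Icc 1 (k + 1), Δ i ^ 2 := by
          rw [← Finset.sum_mul, mul_comm]
  -- first moment bounds
  have haeε : ∀ᵐ ω ∂μ, ∀ i ∈ Finset.Icc 1 (k + 1), |ε i ω| ≤ Mε :=
    (Filter.eventually_all_finset _).mpr hbound
  have haeZ : ∀ᵐ ω ∂μ, ∀ i ∈ Finset.Icc 1 (k + 1), |Z i ω| ≤ Mε ^ 2 :=
    (Filter.eventually_all_finset _).mpr hZb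
  have hAabs : ∫ ω, |A ω| ∂μ ≤ Mε ^ 2 * S := by
    have hb : ∀ᵐ ω ∂μ, |A ω| ≤ (∑ i ∈ Finset.Icc 1 (k + 1), |Δ i|) * Mε ^ 2 := by
      filter_upwards [haeZ] with ω h
      calc |A ω| ≤ ∑ i ∈ Finset.Icc 1 (k + 1), |Δ i * Z i ω| :=
            Finset.abs_sum_le_sum_abs _ _
        _ ≤ ∑ i ∈ Finset.Icc 1 (k + 1), |Δ i| * Mε ^ 2 := by
            refine Finset.sum_le_sum fun i hi => ?_
            rw [abs_mul]
            exact mul_le_mul_of_nonneg_left (h i hi) (abs_nonneg _)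
        _ = (∑ i ∈ Finset.Icc 1 (k + 1), |Δ i|) * Mε ^ 2 := (Finset.sum_mul _ _ _).symm
    calc ∫ ω, |A ω| ∂μ ≤ Real.sqrt (∫ ω, (A ω) ^ 2 ∂μ) :=
          my_abs_integral_le_sqrt hAmeas hb
      _ ≤ Real.sqrt (Mε ^ 4 * ∑ i ∈ Finset.Icc 1 (k + 1), Δ i ^ 2) :=
          Real.sqrt_le_sqrt hAsq
      _ = Mε ^ 2 * S := by
          rw [Real.sqrt_mul (by positivity),
            show Mε ^ 4 = (Mε ^ 2) ^ 2 by ring, Real.sqrt_sq (by positivity)]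
  have hSpabs : ∀ j, j ≤ k + 1 → ∫ ω, |Sp j ω| ∂μ ≤ σ * S := by
    intro j hj
    have hb : ∀ᵐ ω ∂μ, |Sp j ω| ≤ (∑ i ∈ Finset.Icc 1 j, |Δ i|) * Mε := by
      filter_upwards [haeε] with ω h
      calc |Sp j ω| ≤ ∑ i ∈ Finset.Icc 1 j, |Δ i * ε i ω| :=
            Finset.abs_sum_le_sum_abs _ _
        _ ≤ ∑ i ∈ Finset.Icc 1 j, |Δ i| * Mε := by
            refine Finset.sum_le_sum fun i hi => ?_
            rw [abs_mul]
            exact mul_le_mul_of_nonneg_left (h i (hsubset hj hi)) (abs_nonneg _)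
        _ = (∑ i ∈ Finset.Icc 1 j, |Δ i|) * Mε := (Finset.sum_mul _ _ _).symm
    calc ∫ ω, |Sp j ω| ∂μ ≤ Real.sqrt (∫ ω, (Sp j ω) ^ 2 ∂μ) :=
          my_abs_integral_le_sqrt (hSpmeas j hj) hb
      _ ≤ Real.sqrt (σ ^ 2 * ∑ i ∈ Finset.Icc 1 (k + 1), Δ i ^ 2) :=
          Real.sqrt_le_sqrt (hSpsq j hj)
      _ = σ * S := by
          rw [Real.sqrt_mul (by positivity), Real.sqrt_sq hσ.le]
  -- the dominating function G
  set G : Ω → ℝ := fun ω => |A ω| + 4 * B * |Sp (k + 1) ω|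
      + 4 * L * ∑ i ∈ Finset.Icc 1 k, Δ i * |Sp i ω| with hGdef
  have hGnn : ∀ ω, 0 ≤ G ω := by
    intro ω
    have h3 : 0 ≤ ∑ i ∈ Finset.Icc 1 k, Δ i * |Sp i ω| := by
      refine Finset.sum_nonneg fun i hi => ?_
      have hi' := Finset.mem_Icc.mp hi
      exact mul_nonneg (hΔnn i hi'.1 (by omega)) (abs_nonneg _)
    have h1 : 0 ≤ |A ω| := abs_nonneg _
    have h2 : 0 ≤ |Sp (k + 1) ω| := abs_nonneg _
    show 0 ≤ |A ω| + 4 * B * |Sp (k + 1) ω| + 4 * L * ∑ i ∈ Finset.Icc 1 k, Δ i * |Sp i ω|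
    nlinarith
  -- pointwise bound on the supremum set
  have hub : ∀ ω, ∀ v ∈ {v : ℝ | ∃ x ∈ boundedLipschitzClass B L T,
      v = |∑ i ∈ Finset.Icc 1 (k + 1), (t (i + 1) - t i) *
        ((xstar (t i) + ε i ω) ^ 2 - (xstar (t i)) ^ 2 - σ ^ 2 -
          2 * x (t i) * ((xstar (t i) + ε i ω) - xstar (t i)))|}, v ≤ G ω := by
    intro ω v hv
    obtain ⟨x, hx, rfl⟩ := hv
    obtain ⟨hxB, hxL⟩ := hx
    obtain ⟨hsB, hsL⟩ := hxstar
    set c : ℕ → ℝ := fun i => 2 * (xstar (t i) - x (t i)) with hcdef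
    have hrw : ∑ i ∈ Finset.Icc 1 (k + 1), (t (i + 1) - t i) *
        ((xstar (t i) + ε i ω) ^ 2 - (xstar (t i)) ^ 2 - σ ^ 2 -
          2 * x (t i) * ((xstar (t i) + ε i ω) - xstar (t i)))
        = A ω + ∑ i ∈ Finset.Icc 1 (k + 1), c i * (Δ i * ε i ω) := by
      have : A ω + ∑ i ∈ Finset.Icc 1 (k + 1), c i * (Δ i * ε i ω)
          = ∑ i ∈ Finset.Icc 1 (k + 1), (Δ i * Z i ω + c i * (Δ i * ε i ω)) :=
        (Finset.sum_add_distrib).symm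
      rw [this]
      refine Finset.sum_congr rfl fun i _ => ?_
      show (t (i + 1) - t i) * _ = (t (i + 1) - t i) * ((ε i ω) ^ 2 - σ ^ 2)
        + (2 * (xstar (t i) - x (t i))) * ((t (i + 1) - t i) * ε i ω)
      ring
    have habel := my_abel c (fun i => Δ i * ε i ω) k
    have hcb : |c (k + 1)| ≤ 4 * B := by
      have h1 := hsB (t (k + 1)) (htmem (k + 1) (by omega) (by omega))
      have h2 := hxB (t (k + 1)) (htmem (k + 1) (by omega) (by omega))
      have h3 := abs_sub (xstar (t (k + 1))) (x (t (k + 1)))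
      show |2 * (xstar (t (k + 1)) - x (t (k + 1)))| ≤ 4 * B
      rw [abs_mul, abs_two]
      linarith
    have hcdiff : ∀ i ∈ Finset.Icc 1 k, |c i - c (i + 1)| ≤ 4 * L * Δ i := by
      intro i hi
      have hi' := Finset.mem_Icc.mp hi
      have hti := htmem i (by omega) (by omega)
      have hti1 := htmem (i + 1) (by omega) (by omega)
      have h1 := hsL (t i) hti (t (i + 1)) hti1
      have h2 := hxL (t i) hti (t (i + 1)) hti1
      have habs : |t (i + 1) - t i| = Δ i :=
        abs_of_nonneg (hΔnn i (by omega) (by omega))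
      rw [habs] at h1 h2
      have hc : c i - c (i + 1) = 2 * ((xstar (t i) - xstar (t (i + 1)))
          - (x (t i) - x (t (i + 1)))) := by
        show 2 * (xstar (t i) - x (t i)) - 2 * (xstar (t (i + 1)) - x (t (i + 1))) = _
        ring
      rw [hc, abs_mul, abs_two]
      have h4 := abs_sub (xstar (t i) - xstar (t (i + 1))) (x (t i) - x (t (i + 1)))
      have h5 : |xstar (t i) - xstar (t (i + 1))| = |xstar (t (i + 1)) - xstar (t i)| :=
        abs_sub_comm _ _
      have h6 : |x (t i) - x (t (i + 1))| = |x (t (i + 1)) - x (t i)| := abs_sub_comm _ _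
      linarith
    calc |∑ i ∈ Finset.Icc 1 (k + 1), (t (i + 1) - t i) *
        ((xstar (t i) + ε i ω) ^ 2 - (xstar (t i)) ^ 2 - σ ^ 2 -
          2 * x (t i) * ((xstar (t i) + ε i ω) - xstar (t i)))|
        = |A ω + ∑ i ∈ Finset.Icc 1 (k + 1), c i * (Δ i * ε i ω)| := by rw [hrw]
      _ ≤ |A ω| + |∑ i ∈ Finset.Icc 1 (k + 1), c i * (Δ i * ε i ω)| := abs_add_le _ _
      _ ≤ |A ω| + (4 * B * |Sp (k + 1) ω|
            + 4 * L * ∑ i ∈ Finset.Icc 1 k, Δ i * |Sp i ω|) := by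
          have hmain : |∑ i ∈ Finset.Icc 1 (k + 1), c i * (Δ i * ε i ω)|
              ≤ 4 * B * |Sp (k + 1) ω| + 4 * L * ∑ i ∈ Finset.Icc 1 k, Δ i * |Sp i ω| := by
            rw [habel]
            calc |(∑ i ∈ Finset.Icc 1 k, (c i - c (i + 1)) *
                  (∑ j ∈ Finset.Icc 1 i, Δ j * ε j ω))
                  + c (k + 1) * ∑ j ∈ Finset.Icc 1 (k + 1), Δ j * ε j ω|
                ≤ |∑ i ∈ Finset.Icc 1 k, (c i - c (i + 1)) *
                    (∑ j ∈ Finset.Icc 1 i, Δ j * ε j ω)|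
                  + |c (k + 1) * ∑ j ∈ Finset.Icc 1 (k + 1), Δ j * ε j ω| := abs_add_le _ _
              _ ≤ (∑ i ∈ Finset.Icc 1 k, (4 * L * Δ i) * |Sp i ω|)
                  + (4 * B) * |Sp (k + 1) ω| := by
                  apply add_le_add
                  · calc |∑ i ∈ Finset.Icc 1 k, (c i - c (i + 1)) *
                        (∑ j ∈ Finset.Icc 1 i, Δ j * ε j ω)|
                        ≤ ∑ i ∈ Finset.Icc 1 k, |(c i - c (i + 1)) *
                          (∑ j ∈ Finset.Icc 1 i, Δ j * ε j ω)| :=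
                          Finset.abs_sum_le_sum_abs _ _
                      _ ≤ ∑ i ∈ Finset.Icc 1 k, (4 * L * Δ i) * |Sp i ω| := by
                          refine Finset.sum_le_sum fun i hi => ?_
                          rw [abs_mul]
                          exact mul_le_mul_of_nonneg_right (hcdiff i hi) (abs_nonneg _)
                  · rw [abs_mul]
                    exact mul_le_mul_of_nonneg_right hcb (abs_nonneg _)
              _ = 4 * B * |Sp (k + 1) ω|
                  + 4 * L * ∑ i ∈ Finset.Icc 1 k, Δ i * |Sp i ω| := by
                  rw [Finset.mul_sum]
                  have : ∑ i ∈ Finset.Icc 1 k, (4 * L * Δ i) * |Sp i ω|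
                      = ∑ i ∈ Finset.Icc 1 k, 4 * L * (Δ i * |Sp i ω|) :=
                    Finset.sum_congr rfl fun i _ => by ring
                  rw [this]; ring
          linarith
      _ = G ω := by show _ = |A ω| + _ + _; ring
  have hsup : ∀ ω, sSup {v : ℝ | ∃ x ∈ boundedLipschitzClass B L T,
      v = |∑ i ∈ Finset.Icc 1 (k + 1), (t (i + 1) - t i) *
        ((xstar (t i) + ε i ω) ^ 2 - (xstar (t i)) ^ 2 - σ ^ 2 -
          2 * x (t i) * ((xstar (t i) + ε i ω) - xstar (t i)))|} ≤ G ω :=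
    fun ω => Real.sSup_le (hub ω) (hGnn ω)
  have hErrnn : ∀ ω, 0 ≤ sSup {v : ℝ | ∃ x ∈ boundedLipschitzClass B L T,
      v = |∑ i ∈ Finset.Icc 1 (k + 1), (t (i + 1) - t i) *
        ((xstar (t i) + ε i ω) ^ 2 - (xstar (t i)) ^ 2 - σ ^ 2 -
          2 * x (t i) * ((xstar (t i) + ε i ω) - xstar (t i)))|} := by
    intro ω
    have hmem : |∑ i ∈ Finset.Icc 1 (k + 1), (t (i + 1) - t i) *
        ((xstar (t i) + ε i ω) ^ 2 - (xstar (t i)) ^ 2 - σ ^ 2 -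
          2 * xstar (t i) * ((xstar (t i) + ε i ω) - xstar (t i)))| ∈
        {v : ℝ | ∃ x ∈ boundedLipschitzClass B L T,
          v = |∑ i ∈ Finset.Icc 1 (k + 1), (t (i + 1) - t i) *
            ((xstar (t i) + ε i ω) ^ 2 - (xstar (t i)) ^ 2 - σ ^ 2 -
              2 * x (t i) * ((xstar (t i) + ε i ω) - xstar (t i)))|} :=
      ⟨xstar, hxstar, rfl⟩
    exact le_trans (abs_nonneg _) (le_csSup ⟨G ω, fun v hv => hub ω v hv⟩ hmem)
  -- integrability of G and its integral
  have hGint : Integrable G μ := by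
    apply Integrable.add
    apply Integrable.add hAint.abs
    · exact ((hSpint (k + 1) le_rfl).abs.const_mul _)
    · apply Integrable.const_mul
      apply integrable_finset_sum
      intro i hi
      exact ((hSpint i (by have := (Finset.mem_Icc.mp hi).2; omega)).abs.const_mul _)
  have hGeq : ∫ ω, G ω ∂μ = (∫ ω, |A ω| ∂μ) + 4 * B * (∫ ω, |Sp (k + 1) ω| ∂μ)
      + 4 * L * ∑ i ∈ Finset.Icc 1 k, Δ i * ∫ ω, |Sp i ω| ∂μ := by
    have hint2 : Integrable (fun ω => 4 * B * |Sp (k + 1) ω|) μ :=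
      (hSpint (k + 1) le_rfl).abs.const_mul _
    have hint3i : ∀ i ∈ Finset.Icc 1 k, Integrable (fun ω => Δ i * |Sp i ω|) μ :=
      fun i hi => (hSpint i (by have := (Finset.mem_Icc.mp hi).2; omega)).abs.const_mul _
    have hint3 : Integrable (fun ω => 4 * L * ∑ i ∈ Finset.Icc 1 k, Δ i * |Sp i ω|) μ :=
      (integrable_finset_sum _ hint3i).const_mul _
    have hint1 : Integrable (fun ω => |A ω| + 4 * B * |Sp (k + 1) ω|) μ :=
      hAint.abs.add hint2
    show ∫ ω, (|A ω| + 4 * B * |Sp (k + 1) ω|)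
        + 4 * L * ∑ i ∈ Finset.Icc 1 k, Δ i * |Sp i ω| ∂μ = _
    rw [integral_add hint1 hint3, integral_add hAint.abs hint2,
      integral_const_mul, integral_const_mul,
      integral_finset_sum _ hint3i]
    congr 1
    congr 1
    refine Finset.sum_congr rfl fun i _ => integral_const_mul _ _
  -- sum of increments is at most T
  have hΔsum : ∑ i ∈ Finset.Icc 1 k, Δ i ≤ T := by
    have h1 : ∑ i ∈ Finset.Icc 1 k, Δ i ≤ ∑ i ∈ Finset.Icc 1 (k + 1), Δ i := by
      apply Finset.sum_le_sum_of_subset_of_nonneg (hsubset (by omega))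
      intro i hi _
      exact hΔnn i (Finset.mem_Icc.mp hi).1 (Finset.mem_Icc.mp hi).2
    have h2 : ∑ i ∈ Finset.Icc 1 (k + 1), Δ i = T := by
      have h := my_telescope t (k + 1)
      rw [ht1, htm1, sub_zero] at h
      exact h
    linarith
  -- final assembly
  calc (∫ ω, sSup {v : ℝ | ∃ x ∈ boundedLipschitzClass B L T,
        v = |∑ i ∈ Finset.Icc 1 (k + 1), (t (i + 1) - t i) *
          ((xstar (t i) + ε i ω) ^ 2 - (xstar (t i)) ^ 2 - σ ^ 2 -
            2 * x (t i) * ((xstar (t i) + ε i ω) - xstar (t i)))|} ∂μ)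
      ≤ ∫ ω, G ω ∂μ := by
        apply integral_mono_of_nonneg (Filter.Eventually.of_forall hErrnn) hGint
        exact Filter.Eventually.of_forall hsup
    _ = (∫ ω, |A ω| ∂μ) + 4 * B * (∫ ω, |Sp (k + 1) ω| ∂μ)
        + 4 * L * ∑ i ∈ Finset.Icc 1 k, Δ i * ∫ ω, |Sp i ω| ∂μ := hGeq
    _ ≤ Mε ^ 2 * S + 4 * B * (σ * S) + 4 * L * (T * (σ * S)) := by
        have h3 : ∑ i ∈ Finset.Icc 1 k, Δ i * ∫ ω, |Sp i ω| ∂μ ≤ T * (σ * S) := by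
          calc ∑ i ∈ Finset.Icc 1 k, Δ i * ∫ ω, |Sp i ω| ∂μ
              ≤ ∑ i ∈ Finset.Icc 1 k, Δ i * (σ * S) := by
                refine Finset.sum_le_sum fun i hi => ?_
                have hi' := Finset.mem_Icc.mp hi
                exact mul_le_mul_of_nonneg_left
                  (hSpabs i (by omega)) (hΔnn i hi'.1 (by omega))
            _ = (∑ i ∈ Finset.Icc 1 k, Δ i) * (σ * S) := (Finset.sum_mul _ _ _).symm
            _ ≤ T * (σ * S) := by
                apply mul_le_mul_of_nonneg_right hΔsum
                positivity
        have h2 := hSpabs (k + 1) le_rfl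
        have h2' : 4 * B * (∫ ω, |Sp (k + 1) ω| ∂μ) ≤ 4 * B * (σ * S) := by
          apply mul_le_mul_of_nonneg_left h2; positivity
        have h3' : 4 * L * ∑ i ∈ Finset.Icc 1 k, Δ i * ∫ ω, |Sp i ω| ∂μ
            ≤ 4 * L * (T * (σ * S)) := by
          apply mul_le_mul_of_nonneg_left h3; positivity
        linarith [hAabs]
    _ = (Mε ^ 2 + 4 * B * σ + 4 * L * T * σ) * S := by ring
end

section
/- There exist constants L₉ > 0 and K₂ > 0, depending only on L, M, r, T, σ and M_ε, such that for every ε > 0, P( L(f̂, x̂₀) ≥ L₉·sqrt(Σ_{i=1}^m (t_{i+1} − t_i)²) + ε ) ≤ exp( −2ε² / (K₂² · Σ_{i=1}^m (t_{i+1} − t_i)²) ), where L(f, x₀) := Σ_{i=1}^m (t_{i+1} − t_i)·(x(x₀,f,t_i) − x*(t_i))². -/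
open Real Set MeasureTheory ProbabilityTheory

lemma hoeff_pointwise (c y l : ℝ) (hc : 0 < c) (hy : |y| ≤ c) :
    Real.exp (l * y) ≤ Real.cosh (l * c) + (y / c) * Real.sinh (l * c) := by
  obtain ⟨hy1, hy2⟩ := abs_le.mp hy
  have hθ : 0 ≤ (c + y) / (2 * c) := by
    apply div_nonneg (by linarith) (by linarith)
  have hθ' : 0 ≤ (c - y) / (2 * c) := by
    apply div_nonneg (by linarith) (by linarith)
  have hsum : (c + y) / (2 * c) + (c - y) / (2 * c) = 1 := by
    field_simp; ring
  have h := convexOn_exp.2 (Set.mem_univ (l * c)) (Set.mem_univ (-(l * c)))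
    hθ hθ' hsum
  simp only [smul_eq_mul] at h
  have harg : (c + y) / (2 * c) * (l * c) + (c - y) / (2 * c) * -(l * c) = l * y := by
    field_simp; ring
  rw [harg] at h
  refine h.trans (le_of_eq ?_)
  rw [Real.cosh_eq, Real.sinh_eq]
  field_simp
  ring

lemma hoeff_mgf {Ω : Type} [MeasurableSpace Ω] (μ : Measure Ω) [IsProbabilityMeasure μ]
    (Y : Ω → ℝ) (hY : Measurable Y) (c l : ℝ) (hc : 0 ≤ c)
    (hb : ∀ᵐ ω ∂μ, |Y ω| ≤ c) (hmean : ∫ ω, Y ω ∂μ = 0) :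
    ∫ ω, Real.exp (l * Y ω) ∂μ ≤ Real.exp (l ^ 2 * c ^ 2 / 2) := by
  rcases eq_or_lt_of_le hc with hc0 | hc0
  · -- c = 0 : Y = 0 a.e.
    have h1 : ∫ ω, Real.exp (l * Y ω) ∂μ = 1 := by
      have : ∀ᵐ ω ∂μ, Real.exp (l * Y ω) = 1 := by
        filter_upwards [hb] with ω hω
        have : Y ω = 0 := by
          rw [← hc0] at hω
          exact abs_eq_zero.mp (le_antisymm hω (abs_nonneg _))
        simp [this]
      rw [integral_congr_ae this]
      simp
    rw [h1]
    exact Real.one_le_exp (by positivity)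
  · have hintY : Integrable Y μ := by
      refine ⟨hY.aestronglyMeasurable, ?_⟩
      refine HasFiniteIntegral.of_bounded (C := c) ?_
      filter_upwards [hb] with ω hω
      rwa [Real.norm_eq_abs]
    have hintE : Integrable (fun ω => Real.exp (l * Y ω)) μ := by
      refine ⟨((hY.const_mul l).exp).aestronglyMeasurable, ?_⟩
      refine HasFiniteIntegral.of_bounded (C := Real.exp (|l| * c)) ?_
      filter_upwards [hb] with ω hω
      rw [Real.norm_eq_abs, abs_of_pos (Real.exp_pos _)]
      apply Real.exp_le_exp.mpr
      calc l * Y ω ≤ |l * Y ω| := le_abs_self _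
        _ = |l| * |Y ω| := abs_mul _ _
        _ ≤ |l| * c := by
            exact mul_le_mul_of_nonneg_left hω (abs_nonneg _)
    have hmono : ∫ ω, Real.exp (l * Y ω) ∂μ ≤
        ∫ ω, (Real.cosh (l * c) + (Y ω / c) * Real.sinh (l * c)) ∂μ := by
      refine integral_mono_ae hintE ?_ ?_
      · exact (integrable_const _).add
          ((hintY.div_const c).mul_const _)
      · filter_upwards [hb] with ω hω
        exact hoeff_pointwise c (Y ω) l hc0 hω
    have heval : ∫ ω, (Real.cosh (l * c) + (Y ω / c) * Real.sinh (l * c)) ∂μ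
        = Real.cosh (l * c) := by
      rw [integral_add (integrable_const _) ((hintY.div_const c).mul_const _)]
      simp only [integral_const, measure_univ, ENNReal.toReal_one, smul_eq_mul, one_mul]
      rw [integral_mul_const, integral_div, hmean]
      simp
    calc ∫ ω, Real.exp (l * Y ω) ∂μ ≤ Real.cosh (l * c) := hmono.trans_eq heval
      _ ≤ Real.exp ((l * c) ^ 2 / 2) := Real.cosh_le_exp_half_sq _
      _ = Real.exp (l ^ 2 * c ^ 2 / 2) := by rw [mul_pow]


lemma integrable_of_abs_bound {Ω : Type} [MeasurableSpace Ω] (μ : Measure Ω)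
    [IsProbabilityMeasure μ] {g : Ω → ℝ} (hg : AEStronglyMeasurable g μ) {C : ℝ}
    (h : ∀ᵐ ω ∂μ, |g ω| ≤ C) : Integrable g μ :=
  ⟨hg, HasFiniteIntegral.of_bounded (C := C)
    (by filter_upwards [h] with ω hω; rwa [Real.norm_eq_abs])⟩

set_option maxHeartbeats 1000000 in
lemma maximal_hoeffding {Ω : Type} [MeasurableSpace Ω] (μ : Measure Ω) [IsProbabilityMeasure μ]
    (m : ℕ) (Y : Fin m → Ω → ℝ) (hmeas : ∀ i, Measurable (Y i))
    (hindep : iIndepFun Y μ)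
    (hmean : ∀ i, ∫ ω, Y i ω ∂μ = 0)
    (c : Fin m → ℝ) (hc : ∀ i, 0 ≤ c i) (hb : ∀ i, ∀ᵐ ω ∂μ, |Y i ω| ≤ c i)
    (u l : ℝ) (hu : 0 < u) (hl : 0 ≤ l) :
    (μ {ω | ∃ k ≤ m, u ≤ ∑ i ∈ Finset.univ.filter (fun i : Fin m => (i : ℕ) < k), Y i ω}).toReal
      ≤ Real.exp (l ^ 2 * (∑ i, (c i) ^ 2) / 2 - l * u) := by
  classical
  set P : ℕ → Ω → ℝ := fun k ω => ∑ i ∈ Finset.univ.filter (fun i : Fin m => (i : ℕ) < k), Y i ω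
    with hP
  set A : ℕ → Set Ω := fun k => {ω | u ≤ P k ω} ∩ ⋂ (j : ℕ), ⋂ (_ : j < k), {ω | P j ω < u}
    with hA
  have hPmeas : ∀ k, Measurable (P k) := fun k =>
    Finset.measurable_sum _ (fun i _ => hmeas i)
  have hAmeas : ∀ k, MeasurableSet (A k) := fun k =>
    (measurableSet_le measurable_const (hPmeas k)).inter
      (MeasurableSet.iInter fun j => MeasurableSet.iInter fun _ =>
        measurableSet_lt (hPmeas j) measurable_const)
  have hAmem : ∀ k ω, ω ∈ A k ↔ (u ≤ P k ω ∧ ∀ j < k, P j ω < u) := by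
    intro k ω
    simp [hA, Set.mem_iInter]
  -- the event is covered by the first-entry sets
  have hsub : {ω | ∃ k ≤ m, u ≤ P k ω} ⊆ ⋃ k ∈ Finset.range (m + 1), A k := by
    intro ω hω
    obtain ⟨k, hkm, hku⟩ := hω
    have hex : ∃ n, u ≤ P n ω := ⟨k, hku⟩
    refine Set.mem_iUnion₂.mpr ⟨Nat.find hex, ?_, ?_⟩
    · have : Nat.find hex ≤ k := Nat.find_min' hex hku
      exact Finset.mem_range.mpr (by omega)
    · rw [hAmem]
      exact ⟨Nat.find_spec hex, fun j hj => lt_of_not_ge (Nat.find_min hex hj)⟩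
  -- ae bounds
  have hball : ∀ᵐ ω ∂μ, ∀ i, |Y i ω| ≤ c i := ae_all_iff.mpr hb
  have hPb : ∀ k, ∀ᵐ ω ∂μ, |P k ω| ≤ ∑ i, c i := by
    intro k
    filter_upwards [hball] with ω hω
    calc |P k ω| ≤ ∑ i ∈ Finset.univ.filter (fun i : Fin m => (i : ℕ) < k), |Y i ω| :=
          Finset.abs_sum_le_sum_abs _ _
      _ ≤ ∑ i ∈ Finset.univ.filter (fun i : Fin m => (i : ℕ) < k), c i :=
          Finset.sum_le_sum (fun i _ => hω i)
      _ ≤ ∑ i, c i := Finset.sum_le_sum_of_subset_of_nonneg (Finset.filter_subset _ _)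
          (fun i _ _ => hc i)
  have hYint : ∀ i, Integrable (Y i) μ := fun i =>
    integrable_of_abs_bound μ (hmeas i).aestronglyMeasurable (hb i)
  -- the key estimate for each k ≤ m
  have key : ∀ k ∈ Finset.range (m + 1),
      Real.exp (l * u) * (μ (A k)).toReal ≤
        ∫ ω, Set.indicator (A k) (fun _ => (1 : ℝ)) ω * Real.exp (l * P m ω) ∂μ := by
    intro k hk
    rw [Finset.mem_range] at hk
    set S : Finset (Fin m) := Finset.univ.filter (fun i : Fin m => (i : ℕ) < k) with hS
    set Tt : Finset (Fin m) := Finset.univ.filter (fun i : Fin m => ¬ (i : ℕ) < k) with hT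
    set Q : Ω → ℝ := fun ω => ∑ i ∈ Tt, Y i ω with hQ
    have hQmeas : Measurable Q := Finset.measurable_sum _ (fun i _ => hmeas i)
    have hPQ : ∀ ω, P m ω = P k ω + Q ω := by
      intro ω
      have h1 : P m ω = ∑ i, Y i ω := by
        simp only [hP]
        congr 1
        apply Finset.filter_true_of_mem
        intro i _
        exact i.isLt
      have h2 : P k ω + Q ω = ∑ i, Y i ω := by
        simp only [hP, hQ, hS, hT]
        exact Finset.sum_filter_add_sum_filter_not _ _ _
      rw [h1, ← h2]
    have hQb : ∀ᵐ ω ∂μ, |Q ω| ≤ ∑ i, c i := by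
      filter_upwards [hball] with ω hω
      calc |Q ω| ≤ ∑ i ∈ Tt, |Y i ω| := Finset.abs_sum_le_sum_abs _ _
        _ ≤ ∑ i ∈ Tt, c i := Finset.sum_le_sum (fun i _ => hω i)
        _ ≤ ∑ i, c i := Finset.sum_le_sum_of_subset_of_nonneg (Finset.filter_subset _ _)
            (fun i _ _ => hc i)
    have hQint : Integrable Q μ := integrable_of_abs_bound μ hQmeas.aestronglyMeasurable hQb
    have hexpQint : Integrable (fun ω => Real.exp (l * Q ω)) μ := by
      refine integrable_of_abs_bound μ ((hQmeas.const_mul l).exp).aestronglyMeasurable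
        (C := Real.exp (|l| * ∑ i, c i)) ?_
      filter_upwards [hQb] with ω hω
      rw [abs_of_pos (Real.exp_pos _)]
      apply Real.exp_le_exp.mpr
      calc l * Q ω ≤ |l * Q ω| := le_abs_self _
        _ = |l| * |Q ω| := abs_mul _ _
        _ ≤ |l| * (∑ i, c i) := mul_le_mul_of_nonneg_left hω (abs_nonneg _)
    -- independence of the indicator and the tail factor
    have hdisj : Disjoint S Tt := Finset.disjoint_filter_filter_not _ _ _
    have hIF := hindep.indepFun_finset S Tt hdisj hmeas
    -- prefix sums as functions of the head coordinates
    set s : ℕ → ((i : S) → ℝ) → ℝ :=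
      fun j x => ∑ i : S, if ((i : Fin m) : ℕ) < j then x i else 0 with hs
    have hsmeas : ∀ j, Measurable (s j) := by
      intro j
      apply Finset.measurable_sum
      intro i _
      by_cases hij : ((i : Fin m) : ℕ) < j
      · simpa [hij] using measurable_pi_apply i
      · simpa [hij] using measurable_const (a := (0:ℝ)) (f := fun _ : ((i : S) → ℝ) => (0:ℝ))
    set B : Set ((i : S) → ℝ) :=
      {x | u ≤ s k x} ∩ ⋂ (j : ℕ), ⋂ (_ : j < k), {x | s j x < u} with hB
    have hBmeas : MeasurableSet B :=
      (measurableSet_le measurable_const (hsmeas k)).inter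
        (MeasurableSet.iInter fun j => MeasurableSet.iInter fun _ =>
          measurableSet_lt (hsmeas j) measurable_const)
    have hBmem : ∀ x, x ∈ B ↔ (u ≤ s k x ∧ ∀ j < k, s j x < u) := by
      intro x
      simp [hB, Set.mem_iInter]
    set φ : ((i : S) → ℝ) → ℝ := Set.indicator B (fun _ => 1) with hφ
    set ψ : ((i : Tt) → ℝ) → ℝ := fun x => Real.exp (l * ∑ i, x i) with hψ
    have hφmeas : Measurable φ := measurable_const.indicator hBmeas
    have hψmeas : Measurable ψ :=
      ((Finset.measurable_sum Finset.univ (fun (i : Tt) _ =>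
        measurable_pi_apply i)).const_mul l).exp
    have hcomp := hIF.comp hφmeas hψmeas
    -- identify the composed functions
    have hsj : ∀ (ω : Ω) (j : ℕ), j ≤ k → s j (fun i : S => Y i ω) = P j ω := by
      intro ω j hj
      have e1 : s j (fun i : S => Y i ω)
          = ∑ i ∈ S, (if (i : ℕ) < j then Y i ω else 0) :=
        Finset.sum_coe_sort S (fun i => if (i : ℕ) < j then Y i ω else 0)
      have e2 : ∑ i ∈ S, (if (i : ℕ) < j then Y i ω else 0)
          = ∑ i ∈ S.filter (fun i : Fin m => (i : ℕ) < j), Y i ω :=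
        (Finset.sum_filter _ _).symm
      have e3 : S.filter (fun i : Fin m => (i : ℕ) < j)
          = Finset.univ.filter (fun i : Fin m => (i : ℕ) < j) := by
        rw [hS, Finset.filter_filter]
        apply Finset.filter_congr
        intro i _
        constructor
        · intro h; exact h.2
        · intro h; exact ⟨by omega, h⟩
      rw [e1, e2, e3]
    have hind_eq : (fun ω => φ (fun i : S => Y i ω)) =
        Set.indicator (A k) (fun _ => (1 : ℝ)) := by
      funext ω
      have hmem : ((fun i : S => Y i ω) ∈ B) ↔ ω ∈ A k := by
        rw [hBmem, hAmem]
        constructor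
        · rintro ⟨h1, h2⟩
          exact ⟨by rwa [hsj ω k le_rfl] at h1,
            fun j hj => by rw [← hsj ω j (le_of_lt hj)]; exact h2 j hj⟩
        · rintro ⟨h1, h2⟩
          exact ⟨by rwa [hsj ω k le_rfl],
            fun j hj => by rw [hsj ω j (le_of_lt hj)]; exact h2 j hj⟩
      by_cases h : ω ∈ A k
      · rw [hφ, Set.indicator_of_mem (hmem.mpr h), Set.indicator_of_mem h]
      · rw [hφ, Set.indicator_of_notMem (fun hh => h (hmem.mp hh)),
          Set.indicator_of_notMem h]
    have hexp_eq : (fun ω => ψ (fun i : Tt => Y i ω)) = fun ω => Real.exp (l * Q ω) := by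
      funext ω
      rw [hψ, hQ]
      simp only
      congr 1
      rw [Finset.sum_coe_sort Tt (fun i => Y i ω)]
    simp only [Function.comp_def] at hcomp
    rw [hind_eq, hexp_eq] at hcomp
    -- factorize the integral
    have hfact : ∫ ω, Set.indicator (A k) (fun _ => (1:ℝ)) ω * Real.exp (l * Q ω) ∂μ =
        (μ (A k)).toReal * ∫ ω, Real.exp (l * Q ω) ∂μ := by
      have h1 := hcomp.integral_mul_eq_mul_integral
        (measurable_const.indicator (hAmeas k)).aestronglyMeasurable
        ((hQmeas.const_mul l).exp).aestronglyMeasurable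
      have h2 : ∫ ω, Set.indicator (A k) (fun _ => (1:ℝ)) ω ∂μ = (μ (A k)).toReal := by
        rw [integral_indicator_const (1 : ℝ) (hAmeas k)]
        simp [Measure.real]
      calc ∫ ω, Set.indicator (A k) (fun _ => (1:ℝ)) ω * Real.exp (l * Q ω) ∂μ
          = ∫ ω, (Set.indicator (A k) (fun _ => (1:ℝ)) * fun ω => Real.exp (l * Q ω)) ω ∂μ := rfl
        _ = (∫ ω, Set.indicator (A k) (fun _ => (1:ℝ)) ω ∂μ) *
            ∫ ω, Real.exp (l * Q ω) ∂μ := h1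
        _ = (μ (A k)).toReal * ∫ ω, Real.exp (l * Q ω) ∂μ := by rw [h2]
    -- the tail factor has integral ≥ 1
    have hQ1 : 1 ≤ ∫ ω, Real.exp (l * Q ω) ∂μ := by
      have hmono : ∫ ω, (1 + l * Q ω) ∂μ ≤ ∫ ω, Real.exp (l * Q ω) ∂μ := by
        apply integral_mono ((integrable_const _).add (hQint.const_mul l)) hexpQint
        intro ω
        have := Real.add_one_le_exp (l * Q ω)
        simp only [Pi.add_apply]
        linarith
      have heval : ∫ ω, (1 + l * Q ω) ∂μ = 1 := by
        rw [integral_add (integrable_const _) (hQint.const_mul l)]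
        simp only [integral_const, measure_univ, ENNReal.toReal_one, smul_eq_mul, one_mul, probReal_univ]
        rw [integral_const_mul]
        have hQ0 : ∫ ω, Q ω ∂μ = 0 := by
          rw [hQ]
          simp only
          rw [integral_finset_sum _ (fun i _ => hYint i)]
          exact Finset.sum_eq_zero (fun i _ => hmean i)
        rw [hQ0]
        ring
      linarith
    -- put things together
    have hμnn : (0:ℝ) ≤ (μ (A k)).toReal := ENNReal.toReal_nonneg
    calc Real.exp (l * u) * (μ (A k)).toReal
        ≤ Real.exp (l * u) * ((μ (A k)).toReal * ∫ ω, Real.exp (l * Q ω) ∂μ) := by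
          have : (μ (A k)).toReal * 1 ≤ (μ (A k)).toReal * ∫ ω, Real.exp (l * Q ω) ∂μ :=
            mul_le_mul_of_nonneg_left hQ1 hμnn
          nlinarith [Real.exp_pos (l * u)]
      _ = Real.exp (l * u) * ∫ ω, Set.indicator (A k) (fun _ => (1:ℝ)) ω *
            Real.exp (l * Q ω) ∂μ := by rw [hfact]
      _ = ∫ ω, Set.indicator (A k) (fun _ => (1:ℝ)) ω *
            (Real.exp (l * u) * Real.exp (l * Q ω)) ∂μ := by
          rw [← integral_const_mul]
          congr 1
          funext ω
          ring
      _ ≤ ∫ ω, Set.indicator (A k) (fun _ => (1:ℝ)) ω * Real.exp (l * P m ω) ∂μ := by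
          apply integral_mono_ae
          · apply integrable_of_abs_bound μ
              (((measurable_const.indicator (hAmeas k))).mul
                (((hQmeas.const_mul l).exp.const_mul _))).aestronglyMeasurable
              (C := Real.exp (l * u) * Real.exp (|l| * ∑ i, c i))
            filter_upwards [hQb] with ω hω
            rw [Pi.mul_apply, abs_mul]
            rcases Set.indicator_eq_zero_or_self (A k) (fun _ => (1:ℝ)) ω with h | h <;> rw [h]
            · simp only [abs_zero, zero_mul]
              positivity
            · simp only [abs_one, one_mul]
              rw [abs_of_pos (by positivity)]
              apply mul_le_mul_of_nonneg_left _ (le_of_lt (Real.exp_pos _))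
              apply Real.exp_le_exp.mpr
              calc l * Q ω ≤ |l * Q ω| := le_abs_self _
                _ = |l| * |Q ω| := abs_mul _ _
                _ ≤ |l| * (∑ i, c i) := mul_le_mul_of_nonneg_left hω (abs_nonneg _)
          · apply integrable_of_abs_bound μ
              ((measurable_const.indicator (hAmeas k)).mul
                ((hPmeas m).const_mul l).exp).aestronglyMeasurable
              (C := Real.exp (|l| * ∑ i, c i))
            filter_upwards [hPb m] with ω hω
            rw [Pi.mul_apply, abs_mul]
            rcases Set.indicator_eq_zero_or_self (A k) (fun _ => (1:ℝ)) ω with h | h <;> rw [h]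
            · simp only [abs_zero, zero_mul]
              positivity
            · simp only [abs_one, one_mul]
              rw [abs_of_pos (Real.exp_pos _)]
              apply Real.exp_le_exp.mpr
              calc l * P m ω ≤ |l * P m ω| := le_abs_self _
                _ = |l| * |P m ω| := abs_mul _ _
                _ ≤ |l| * (∑ i, c i) := mul_le_mul_of_nonneg_left hω (abs_nonneg _)
          · apply Filter.Eventually.of_forall
            intro ω
            by_cases h : ω ∈ A k
            · simp only [Set.indicator_of_mem h, one_mul]
              rw [← Real.exp_add, hPQ ω]
              apply Real.exp_le_exp.mpr
              have hu' : u ≤ P k ω := ((hAmem k ω).mp h).1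
              have := mul_le_mul_of_nonneg_left hu' hl
              linarith
            · simp [Set.indicator_of_notMem h]
  -- integrability of the summands and the dominating function
  have hintexp : Integrable (fun ω => Real.exp (l * P m ω)) μ := by
    refine integrable_of_abs_bound μ (((hPmeas m).const_mul l).exp).aestronglyMeasurable
      (C := Real.exp (|l| * ∑ i, c i)) ?_
    filter_upwards [hPb m] with ω hω
    rw [abs_of_pos (Real.exp_pos _)]
    apply Real.exp_le_exp.mpr
    calc l * P m ω ≤ |l * P m ω| := le_abs_self _
      _ = |l| * |P m ω| := abs_mul _ _
      _ ≤ |l| * (∑ i, c i) := mul_le_mul_of_nonneg_left hω (abs_nonneg _)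
  have hintk : ∀ k, Integrable
      (fun ω => Set.indicator (A k) (fun _ => (1:ℝ)) ω * Real.exp (l * P m ω)) μ := by
    intro k
    refine integrable_of_abs_bound μ
      ((measurable_const.indicator (hAmeas k)).mul
        ((hPmeas m).const_mul l).exp).aestronglyMeasurable
      (C := Real.exp (|l| * ∑ i, c i)) ?_
    filter_upwards [hPb m] with ω hω
    rw [abs_mul]
    rcases Set.indicator_eq_zero_or_self (A k) (fun _ => (1:ℝ)) ω with h | h <;> rw [h]
    · simp only [abs_zero, zero_mul]
      positivity
    · simp only [abs_one, one_mul]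
      rw [abs_of_pos (Real.exp_pos _)]
      apply Real.exp_le_exp.mpr
      calc l * P m ω ≤ |l * P m ω| := le_abs_self _
        _ = |l| * |P m ω| := abs_mul _ _
        _ ≤ |l| * (∑ i, c i) := mul_le_mul_of_nonneg_left hω (abs_nonneg _)
  -- the indicators sum to at most one (first-entry sets are disjoint)
  have hsum_ind : ∀ ω, (∑ k ∈ Finset.range (m+1),
      Set.indicator (A k) (fun _ => (1:ℝ)) ω) ≤ 1 := by
    intro ω
    have hcard : ((Finset.range (m+1)).filter (fun k => ω ∈ A k)).card ≤ 1 := by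
      rw [Finset.card_le_one]
      intro a ha b hb
      simp only [Finset.mem_filter] at ha hb
      by_contra hne
      rcases lt_or_gt_of_ne hne with hab | hab
      · exact absurd (((hAmem b ω).mp hb.2).2 a hab) (not_lt.mpr ((hAmem a ω).mp ha.2).1)
      · exact absurd (((hAmem a ω).mp ha.2).2 b hab) (not_lt.mpr ((hAmem b ω).mp hb.2).1)
    have : (∑ k ∈ Finset.range (m+1), Set.indicator (A k) (fun _ => (1:ℝ)) ω)
        = ∑ k ∈ Finset.range (m+1), (if ω ∈ A k then (1:ℝ) else 0) := by
      apply Finset.sum_congr rfl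
      intro k _
      exact Set.indicator_apply _ _ _
    rw [this, Finset.sum_boole]
    exact_mod_cast hcard
  -- sum the key estimates
  have htot : ∑ k ∈ Finset.range (m+1),
      ∫ ω, Set.indicator (A k) (fun _ => (1:ℝ)) ω * Real.exp (l * P m ω) ∂μ
      ≤ ∫ ω, Real.exp (l * P m ω) ∂μ := by
    rw [← integral_finset_sum _ (fun k _ => hintk k)]
    apply integral_mono (integrable_finset_sum _ (fun k _ => hintk k)) hintexp
    intro ω
    simp only
    rw [← Finset.sum_mul]
    have h1 := hsum_ind ω
    have h2 := Real.exp_pos (l * P m ω)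
    nlinarith
  -- the moment generating function bound
  have hPm : ∀ ω, P m ω = ∑ i, Y i ω := by
    intro ω
    simp only [hP]
    congr 1
    apply Finset.filter_true_of_mem
    intro i _
    exact i.isLt
  have hmgf : ∫ ω, Real.exp (l * P m ω) ∂μ ≤ Real.exp (l ^ 2 * (∑ i, (c i) ^ 2) / 2) := by
    have h1 : mgf (∑ i, Y i) μ l = ∫ ω, Real.exp (l * P m ω) ∂μ := by
      rw [mgf]
      congr 1
      funext ω
      simp [hPm ω]
    rw [← h1, hindep.mgf_sum hmeas Finset.univ]
    calc ∏ i, mgf (Y i) μ l ≤ ∏ i, Real.exp (l ^ 2 * (c i) ^ 2 / 2) := by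
          apply Finset.prod_le_prod (fun i _ => mgf_nonneg)
          intro i _
          exact hoeff_mgf μ (Y i) (hmeas i) (c i) l (hc i) (hb i) (hmean i)
      _ = Real.exp (∑ i, l ^ 2 * (c i) ^ 2 / 2) := (Real.exp_sum _ _).symm
      _ = Real.exp (l ^ 2 * (∑ i, (c i) ^ 2) / 2) := by
          congr 1
          rw [Finset.mul_sum, Finset.sum_div]
  -- put everything together
  have hμsub : (μ {ω | ∃ k ≤ m, u ≤ P k ω}).toReal
      ≤ ∑ k ∈ Finset.range (m+1), (μ (A k)).toReal := by
    have h1 : μ {ω | ∃ k ≤ m, u ≤ P k ω} ≤ ∑ k ∈ Finset.range (m+1), μ (A k) :=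
      (measure_mono hsub).trans (measure_biUnion_finset_le _ _)
    have h2 : (∑ k ∈ Finset.range (m+1), μ (A k)) ≠ ⊤ :=
      (ENNReal.sum_lt_top.mpr (fun k _ => measure_lt_top μ _)).ne
    calc (μ {ω | ∃ k ≤ m, u ≤ P k ω}).toReal ≤
        (∑ k ∈ Finset.range (m+1), μ (A k)).toReal := ENNReal.toReal_mono h2 h1
      _ = ∑ k ∈ Finset.range (m+1), (μ (A k)).toReal :=
        ENNReal.toReal_sum (fun k _ => (measure_lt_top μ _).ne)
  have hchain : Real.exp (l * u) * (μ {ω | ∃ k ≤ m, u ≤ P k ω}).toReal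
      ≤ Real.exp (l ^ 2 * (∑ i, (c i) ^ 2) / 2) := by
    calc Real.exp (l * u) * (μ {ω | ∃ k ≤ m, u ≤ P k ω}).toReal
        ≤ Real.exp (l * u) * ∑ k ∈ Finset.range (m+1), (μ (A k)).toReal :=
          mul_le_mul_of_nonneg_left hμsub (le_of_lt (Real.exp_pos _))
      _ = ∑ k ∈ Finset.range (m+1), Real.exp (l * u) * (μ (A k)).toReal :=
          Finset.mul_sum _ _ _
      _ ≤ ∑ k ∈ Finset.range (m+1),
            ∫ ω, Set.indicator (A k) (fun _ => (1:ℝ)) ω * Real.exp (l * P m ω) ∂μ :=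
          Finset.sum_le_sum key
      _ ≤ ∫ ω, Real.exp (l * P m ω) ∂μ := htot
      _ ≤ Real.exp (l ^ 2 * (∑ i, (c i) ^ 2) / 2) := hmgf
  rw [Real.exp_sub, le_div_iff₀ (Real.exp_pos _)]
  calc (μ {ω | ∃ k ≤ m, u ≤ P k ω}).toReal * Real.exp (l * u)
      = Real.exp (l * u) * (μ {ω | ∃ k ≤ m, u ≤ P k ω}).toReal := mul_comm _ _
    _ ≤ Real.exp (l ^ 2 * (∑ i, (c i) ^ 2) / 2) := hchain


-- telescoping with an Ico sum
lemma tele_Ico (g : ℕ → ℝ) (i : ℕ) (hi : 1 ≤ i) :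
    g 1 + ∑ j ∈ Finset.Ico 1 i, (g (j + 1) - g j) = g i := by
  induction i with
  | zero => omega
  | succ n ih =>
    rcases Nat.lt_or_ge n 1 with hn | hn
    · interval_cases n
      simp
    · rw [Finset.sum_Ico_succ_top (by omega), ← add_assoc, ih hn]
      ring

-- telescoping Icc sum
lemma tele_Icc (g : ℕ → ℝ) (m : ℕ) :
    ∑ i ∈ Finset.Icc 1 m, (g (i + 1) - g i) = g (m + 1) - g 1 := by
  induction m with
  | zero => simp
  | succ n ih =>
    rw [Finset.sum_Icc_succ_top (by omega), ih]
    ring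

-- reindexing a `Fin m` filtered sum as an `Icc` sum
lemma sum_fin_shift {G : Type} [AddCommMonoid G] (m k : ℕ) (hk : k ≤ m) (g : ℕ → G) :
    ∑ i ∈ Finset.univ.filter (fun i : Fin m => (i : ℕ) < k), g ((i : ℕ) + 1)
      = ∑ i ∈ Finset.Icc 1 k, g i := by
  refine Finset.sum_bij' (i := fun (a : Fin m) _ => (a : ℕ) + 1)
    (j := fun b hb => (⟨b - 1, by simp only [Finset.mem_Icc] at hb; omega⟩ : Fin m))
    ?_ ?_ ?_ ?_ ?_
  · intro a ha
    simp only [Finset.mem_filter] at ha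
    simp only [Finset.mem_Icc]
    omega
  · intro b hb
    simp only [Finset.mem_Icc] at hb
    simp only [Finset.mem_filter, Finset.mem_univ, true_and]
    omega
  · intro a ha
    simp only [Finset.mem_filter] at ha
    apply Fin.ext
    simp
  · intro b hb
    simp only [Finset.mem_Icc] at hb
    simp
    omega
  · intro a ha
    rfl

-- solution estimates : boundedness and Lipschitz continuity on [0, T]
lemma sol_est {L M r T : ℝ} (hL : 0 < L) (hM : 0 < M) (hr : 0 < r) (hT : 0 < T)
    {f : ℝ → ℝ} (hlip : ∀ u v, |f u - f v| ≤ L * |u - v|) (hf0 : |f 0| ≤ M)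
    {x : ℝ → ℝ} {x₀ : ℝ} (hx₀ : |x₀| ≤ r) (h0 : x 0 = x₀)
    (hx : ∀ s ∈ Set.Icc (0:ℝ) T, HasDerivAt x (f (x s)) s) :
    (∀ s ∈ Set.Icc (0:ℝ) T, |x s| ≤ (r + M / L) * Real.exp (L * T)) ∧
    (∀ s ∈ Set.Icc (0:ℝ) T, ∀ s' ∈ Set.Icc (0:ℝ) T,
      |x s' - x s| ≤ (M + L * ((r + M / L) * Real.exp (L * T))) * |s' - s|) := by
  have hfb : ∀ y : ℝ, |f y| ≤ M + L * |y| := by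
    intro y
    have h1 := hlip y 0
    have h2 : |f y| ≤ |f y - f 0| + |f 0| := by
      calc |f y| = |(f y - f 0) + f 0| := by ring_nf
        _ ≤ |f y - f 0| + |f 0| := abs_add_le _ _
    simp only [sub_zero] at h1
    linarith
  have hcont : ContinuousOn x (Set.Icc 0 T) := fun s hs =>
    ((hx s hs).continuousAt).continuousWithinAt
  have hgron := norm_le_gronwallBound_of_norm_deriv_right_le (f := x)
    (f' := fun s => f (x s)) (δ := r) (K := L) (ε := M) (a := 0) (b := T)
    hcont
    (fun s hs => (hx s (Set.Ico_subset_Icc_self hs)).hasDerivWithinAt)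
    (by rw [h0, Real.norm_eq_abs]; exact hx₀)
    (fun s hs => by
      rw [Real.norm_eq_abs, Real.norm_eq_abs]
      have := hfb (x s)
      linarith)
  have hBbd : ∀ s ∈ Set.Icc (0:ℝ) T, |x s| ≤ (r + M / L) * Real.exp (L * T) := by
    intro s hs
    have h1 := hgron s hs
    rw [Real.norm_eq_abs, gronwallBound_of_K_ne_0 hL.ne'] at h1
    simp only [sub_zero] at h1
    have he1 : Real.exp (L * s) ≤ Real.exp (L * T) :=
      Real.exp_le_exp.mpr (mul_le_mul_of_nonneg_left hs.2 hL.le)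
    have he2 : (0:ℝ) < Real.exp (L * s) := Real.exp_pos _
    have hML : (0:ℝ) ≤ M / L := by positivity
    nlinarith
  refine ⟨hBbd, ?_⟩
  intro s hs s' hs'
  have hder : ∀ y ∈ Set.Icc (0:ℝ) T, HasDerivWithinAt x (f (x y)) (Set.Icc 0 T) y :=
    fun y hy => (hx y hy).hasDerivWithinAt
  have hbd : ∀ y ∈ Set.Icc (0:ℝ) T,
      ‖f (x y)‖ ≤ M + L * ((r + M / L) * Real.exp (L * T)) := by
    intro y hy
    rw [Real.norm_eq_abs]
    have h1 := hfb (x y)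
    have h2 := hBbd y hy
    nlinarith
  have := Convex.norm_image_sub_le_of_norm_hasDerivWithin_le hder hbd
    (convex_Icc 0 T) hs hs'
  rwa [Real.norm_eq_abs, Real.norm_eq_abs] at this


set_option maxHeartbeats 2000000 in
/-- **Theorem A.1 (consistency of the exact-ODE estimator).** There are constants
`L₉, K₂ > 0`, depending only on `L, M, r, T, σ, M_ε`, such that for every `ε > 0`,
`P(L(f̂, x̂₀) ≥ L₉·sqrt(Σᵢ(t_{i+1}−t_i)²) + ε) ≤ exp(−2ε²/(K₂²·Σᵢ(t_{i+1}−t_i)²))`,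
where `L(f, x₀) = Σᵢ (t_{i+1}−t_i)·(x(x₀,f,tᵢ) − x*(tᵢ))²`. -/
theorem consistency_exact_ode
    (L M r T σ Mε : ℝ) (hL : 0 < L) (hM : 0 < M) (hr : 0 < r) (hT : 0 < T)
    (hσ : 0 < σ) (hMε : 0 < Mε) :
    ∃ L₉ > (0 : ℝ), ∃ K₂ > (0 : ℝ),
      ∀ (F : Set (ℝ → ℝ))
        (_ : ∀ f ∈ F, ContDiff ℝ 1 f)
        (_ : ∀ f ∈ F, ∀ u v : ℝ, |f u - f v| ≤ L * |u - v|)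
        (_ : ∀ f ∈ F, |f 0| ≤ M)
        -- `sol x₀ f` is the unique solution of `ẋ = f(x)`, `x(0) = x₀`, on `[0,T]`
        (sol : ℝ → (ℝ → ℝ) → ℝ → ℝ)
        (_ : ∀ f ∈ F, ∀ x₀ : ℝ, |x₀| ≤ r → sol x₀ f 0 = x₀ ∧
          ∀ t ∈ Set.Icc (0 : ℝ) T, HasDerivAt (sol x₀ f) (f (sol x₀ f t)) t)
        (m : ℕ) (_ : 1 ≤ m) (t : ℕ → ℝ)
        (_ : t 1 = 0) (_ : ∀ i, 1 ≤ i → i < m → t i < t (i + 1))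
        (_ : t m ≤ T) (_ : t (m + 1) = T)
        -- the true trajectory
        (fstar : ℝ → ℝ) (_ : fstar ∈ F) (x₀star : ℝ) (_ : |x₀star| ≤ r)
        -- the noise
        (Ω : Type) (_ : MeasurableSpace Ω) (μ : Measure Ω) (_ : IsProbabilityMeasure μ)
        (ε : ℕ → Ω → ℝ)
        (_ : ∀ i ∈ Finset.Icc 1 m, Measurable (ε i))
        (_ : iIndepFun (fun i : Fin m => ε (i + 1)) μ)
        (_ : ∀ i ∈ Finset.Icc 1 m, ∫ ω, ε i ω ∂μ = 0)
        (_ : ∀ i ∈ Finset.Icc 1 m, ∫ ω, (ε i ω) ^ 2 ∂μ = σ ^ 2)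
        (_ : ∀ i ∈ Finset.Icc 1 m, ∀ᵐ ω ∂μ, |ε i ω| ≤ Mε)
        -- `(f̂, x̂₀)` is a measurable minimizer of the empirical loss.
        -- With `yᵢ(ω) = x*(tᵢ) + εᵢ(ω)`,
        -- `L̂(f, x₀)(ω) = Σᵢ (t_{i+1}−t_i)·((x(x₀,f,tᵢ) − yᵢ(ω))² − σ²)`.
        (fhat : Ω → ℝ → ℝ) (xhat₀ : Ω → ℝ)
        (_ : ∀ ω, fhat ω ∈ F) (_ : ∀ ω, |xhat₀ ω| ≤ r)
        (_ : ∀ ω, ∀ f ∈ F, ∀ x₀ : ℝ, |x₀| ≤ r →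
          (∑ i ∈ Finset.Icc 1 m, (t (i + 1) - t i) *
            ((sol (xhat₀ ω) (fhat ω) (t i) -
              (sol x₀star fstar (t i) + ε i ω)) ^ 2 - σ ^ 2)) ≤
          (∑ i ∈ Finset.Icc 1 m, (t (i + 1) - t i) *
            ((sol x₀ f (t i) - (sol x₀star fstar (t i) + ε i ω)) ^ 2 - σ ^ 2)))
        (_ : Measurable (fun ω => ∑ i ∈ Finset.Icc 1 m, (t (i + 1) - t i) *
          (sol (xhat₀ ω) (fhat ω) (t i) - sol x₀star fstar (t i)) ^ 2)),
        ∀ e > (0 : ℝ),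
          (μ {ω | (∑ i ∈ Finset.Icc 1 m, (t (i + 1) - t i) *
              (sol (xhat₀ ω) (fhat ω) (t i) - sol x₀star fstar (t i)) ^ 2) ≥
            L₉ * Real.sqrt (∑ i ∈ Finset.Icc 1 m, (t (i + 1) - t i) ^ 2) + e}).toReal ≤
          Real.exp (-2 * e ^ 2 /
            (K₂ ^ 2 * ∑ i ∈ Finset.Icc 1 m, (t (i + 1) - t i) ^ 2)) := by
  classical
  set B : ℝ := (r + M / L) * Real.exp (L * T) with hB
  set Kd : ℝ := M + L * B with hKd
  set C₂ : ℝ := 4 * B + 8 * Kd * T with hC₂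
  have hBpos : 0 < B := by rw [hB]; positivity
  have hKdpos : 0 < Kd := by rw [hKd]; positivity
  have hC₂pos : 0 < C₂ := by rw [hC₂]; positivity
  refine ⟨2 * C₂ * Mε, by positivity, 2 * C₂ * Mε, by positivity, ?_⟩
  intro F _hC1 hlipF hf0F sol hsol m hm t ht1 htinc htmT htm1 fstar hfstar x₀star hx₀star
    Ω mΩ μ hμ ε hεmeas hεindep hεmean _hεvar hεbd fhat xhat₀ hfhatF hxhat₀r hminim _hLmeas e he
  haveI : IsProbabilityMeasure μ := hμ
  set Ssum : ℝ := ∑ i ∈ Finset.Icc 1 m, (t (i + 1) - t i) ^ 2 with hSsum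
  set K : ℝ := 2 * C₂ * Mε with hK
  have hKpos : 0 < K := by rw [hK]; positivity
  -- monotonicity of observation times
  have hstep : ∀ i, 1 ≤ i → i ≤ m → t i ≤ t (i + 1) := by
    intro i h1 h2
    rcases lt_or_eq_of_le h2 with h | h
    · exact (htinc i h1 h).le
    · subst h; rw [htm1]; exact htmT
  have hmono : ∀ i j, 1 ≤ i → i ≤ j → j ≤ m + 1 → t i ≤ t j := by
    intro i j h1 hij hjm
    induction j with
    | zero => omega
    | succ n ih =>
      rcases Nat.eq_or_lt_of_le hij with h | h
      · rw [h]
      · rcases Nat.lt_or_ge n 1 with hn | hn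
        · omega
        · exact (ih (by omega) (by omega)).trans (hstep n hn (by omega))
  have htpos : ∀ i, 1 ≤ i → i ≤ m + 1 → t i ∈ Set.Icc (0 : ℝ) T := by
    intro i h1 h2
    constructor
    · rw [← ht1]; exact hmono 1 i le_rfl h1 h2
    · rw [← htm1]; exact hmono i (m + 1) h1 (by omega) le_rfl
  have hΔnn : ∀ i, 1 ≤ i → i ≤ m → 0 ≤ t (i + 1) - t i :=
    fun i h1 h2 => sub_nonneg.mpr (hstep i h1 h2)
  have hΔsum : ∑ i ∈ Finset.Icc 1 m, (t (i + 1) - t i) = T := by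
    rw [tele_Icc t m, htm1, ht1, sub_zero]
  have hSnn : 0 ≤ Ssum := by
    rw [hSsum]
    exact Finset.sum_nonneg (fun i _ => sq_nonneg _)
  have hSpos : 0 < Ssum := by
    rw [hSsum]
    have h12 : t 1 < t 2 := by
      rcases Nat.lt_or_ge 1 m with h | h
      · exact htinc 1 le_rfl h
      · have hm1 : m = 1 := by omega
        subst hm1
        rw [ht1, htm1]
        exact hT
    refine Finset.sum_pos' (fun i _ => sq_nonneg _)
      ⟨1, Finset.mem_Icc.mpr ⟨le_rfl, hm⟩, ?_⟩
    have : 0 < t 2 - t 1 := by linarith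
    positivity
  -- the trajectory bounds
  have hstarprop := hsol fstar hfstar x₀star hx₀star
  have hstar := sol_est hL hM hr hT (hlipF fstar hfstar) (hf0F fstar hfstar) hx₀star
    hstarprop.1 hstarprop.2
  have hhat : ∀ ω, (∀ s ∈ Set.Icc (0:ℝ) T, |sol (xhat₀ ω) (fhat ω) s| ≤ B) ∧
      (∀ s ∈ Set.Icc (0:ℝ) T, ∀ s' ∈ Set.Icc (0:ℝ) T,
        |sol (xhat₀ ω) (fhat ω) s' - sol (xhat₀ ω) (fhat ω) s| ≤ Kd * |s' - s|) := by
    intro ω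
    have hp := hsol (fhat ω) (hfhatF ω) (xhat₀ ω) (hxhat₀r ω)
    exact sol_est hL hM hr hT (hlipF _ (hfhatF ω)) (hf0F _ (hfhatF ω)) (hxhat₀r ω) hp.1 hp.2
  set d : Ω → ℕ → ℝ :=
    fun ω i => sol (xhat₀ ω) (fhat ω) (t i) - sol x₀star fstar (t i) with hd
  have hdbd : ∀ ω, ∀ i, 1 ≤ i → i ≤ m + 1 → |d ω i| ≤ 2 * B := by
    intro ω i h1 h2
    have hti := htpos i h1 h2
    have ha := (hhat ω).1 (t i) hti
    have hb := hstar.1 (t i) hti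
    rw [← hB] at hb
    rw [abs_le] at ha hb
    obtain ⟨ha1, ha2⟩ := ha
    obtain ⟨hb1, hb2⟩ := hb
    simp only [hd, abs_le]
    constructor
    · linarith
    · linarith
  have hdlip : ∀ ω, ∀ j, 1 ≤ j → j ≤ m → |d ω (j+1) - d ω j| ≤ 2 * Kd * (t (j+1) - t j) := by
    intro ω j h1 h2
    have htj := htpos j h1 (by omega)
    have htj1 := htpos (j+1) (by omega) (by omega)
    have ha := (hhat ω).2 (t j) htj (t (j+1)) htj1
    have hb := hstar.2 (t j) htj (t (j+1)) htj1
    have habs : |t (j+1) - t j| = t (j+1) - t j := abs_of_nonneg (hΔnn j h1 h2)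
    rw [habs] at ha hb
    rw [← hB, ← hKd] at hb
    rw [abs_le] at ha hb
    obtain ⟨ha1, ha2⟩ := ha
    obtain ⟨hb1, hb2⟩ := hb
    simp only [hd, abs_le]
    constructor
    · linarith
    · linarith
  -- partial sums of the weighted noise
  set Sp : Ω → ℕ → ℝ := fun ω k => ∑ i ∈ Finset.Icc 1 k, (t (i + 1) - t i) * ε i ω with hSp
  -- basic inequality from the minimization property
  have hbasic : ∀ ω, (∑ i ∈ Finset.Icc 1 m, (t (i + 1) - t i) * (d ω i) ^ 2)
      ≤ 2 * ∑ i ∈ Finset.Icc 1 m, (t (i + 1) - t i) * (d ω i * ε i ω) := by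
    intro ω
    have h := hminim ω fstar hfstar x₀star hx₀star
    have e1 : ∀ i ∈ Finset.Icc 1 m, (t (i + 1) - t i) *
        ((sol (xhat₀ ω) (fhat ω) (t i) - (sol x₀star fstar (t i) + ε i ω)) ^ 2 - σ ^ 2)
        = (t (i + 1) - t i) * (d ω i) ^ 2 - (t (i + 1) - t i) * (d ω i * ε i ω) * 2
          + (t (i + 1) - t i) * ((ε i ω) ^ 2 - σ ^ 2) := by
      intro i _
      rw [hd]
      ring
    have e2 : ∀ i ∈ Finset.Icc 1 m, (t (i + 1) - t i) *
        ((sol x₀star fstar (t i) - (sol x₀star fstar (t i) + ε i ω)) ^ 2 - σ ^ 2)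
        = (t (i + 1) - t i) * ((ε i ω) ^ 2 - σ ^ 2) := by
      intro i _
      ring
    rw [Finset.sum_congr rfl e1, Finset.sum_congr rfl e2, Finset.sum_add_distrib,
      Finset.sum_sub_distrib, ← Finset.sum_mul] at h
    linarith
  -- Abel summation
  have habel : ∀ ω, ∑ i ∈ Finset.Icc 1 m, (t (i + 1) - t i) * (d ω i * ε i ω)
      = d ω 1 * Sp ω m
        + ∑ j ∈ Finset.Ico 1 m, (d ω (j + 1) - d ω j) * (Sp ω m - Sp ω j) := by
    intro ω
    have h1 : ∀ i ∈ Finset.Icc 1 m, (t (i + 1) - t i) * (d ω i * ε i ω)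
        = d ω 1 * ((t (i + 1) - t i) * ε i ω)
          + ∑ j ∈ Finset.Ico 1 i, ((d ω (j + 1) - d ω j) * ((t (i + 1) - t i) * ε i ω)) := by
      intro i hi
      rw [← Finset.sum_mul]
      have h2 := tele_Ico (d ω) i (Finset.mem_Icc.mp hi).1
      calc (t (i + 1) - t i) * (d ω i * ε i ω)
          = d ω i * ((t (i + 1) - t i) * ε i ω) := by ring
        _ = (d ω 1 + ∑ j ∈ Finset.Ico 1 i, (d ω (j + 1) - d ω j))
            * ((t (i + 1) - t i) * ε i ω) := by rw [h2]
        _ = _ := add_mul _ _ _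
    rw [Finset.sum_congr rfl h1, Finset.sum_add_distrib, ← Finset.mul_sum]
    congr 1
    rw [Finset.sum_comm' (s := Finset.Icc 1 m) (t := fun i => Finset.Ico 1 i)
      (t' := Finset.Ico 1 m) (s' := fun j => Finset.Icc (j + 1) m)
      (by intro x y
          simp only [Finset.mem_Icc, Finset.mem_Ico]
          omega)]
    apply Finset.sum_congr rfl
    intro j hj
    rw [← Finset.mul_sum]
    congr 1
    have hj' := Finset.mem_Ico.mp hj
    have hcons := Finset.sum_Ioc_consecutive (fun i => (t (i + 1) - t i) * ε i ω)
      (Nat.zero_le j) (le_of_lt hj'.2)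
    have hIccIoc : ∀ k : ℕ, Finset.Icc 1 k = Finset.Ioc 0 k := fun k => Finset.Icc_add_one_left_eq_Ioc 0 k
    rw [Finset.Icc_add_one_left_eq_Ioc, hSp]
    simp only
    rw [hIccIoc m, hIccIoc j]
    linarith
  -- the threshold
  set u : ℝ := (K * Real.sqrt Ssum + e) / C₂ with hu
  have hupos : 0 < u := by
    rw [hu]
    have := Real.sqrt_nonneg Ssum
    apply div_pos (by positivity) hC₂pos
  -- deterministic implication : if all partial sums are small, the loss is small
  have hpoint : ∀ ω, (∀ k, k ≤ m → |Sp ω k| < u) →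
      (∑ i ∈ Finset.Icc 1 m, (t (i + 1) - t i) * (d ω i) ^ 2) < K * Real.sqrt Ssum + e := by
    intro ω hsp
    have hZ := hbasic ω
    rw [habel ω] at hZ
    have hb1 : |d ω 1 * Sp ω m| < 2 * B * u := by
      rw [abs_mul]
      have h1 := hdbd ω 1 le_rfl (by omega)
      have h2 := hsp m le_rfl
      calc |d ω 1| * |Sp ω m| ≤ 2 * B * |Sp ω m| :=
            mul_le_mul_of_nonneg_right h1 (abs_nonneg _)
        _ < 2 * B * u := (mul_lt_mul_iff_right₀ (by positivity)).mpr h2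
    have hb2 : |∑ j ∈ Finset.Ico 1 m, (d ω (j + 1) - d ω j) * (Sp ω m - Sp ω j)|
        ≤ 4 * Kd * T * u := by
      calc |∑ j ∈ Finset.Ico 1 m, (d ω (j + 1) - d ω j) * (Sp ω m - Sp ω j)|
          ≤ ∑ j ∈ Finset.Ico 1 m, |(d ω (j + 1) - d ω j) * (Sp ω m - Sp ω j)| :=
            Finset.abs_sum_le_sum_abs _ _
        _ ≤ ∑ j ∈ Finset.Ico 1 m, (2 * Kd * (t (j + 1) - t j)) * (2 * u) := by
            apply Finset.sum_le_sum
            intro j hj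
            have hj' := Finset.mem_Ico.mp hj
            rw [abs_mul]
            have hA := hdlip ω j hj'.1 (le_of_lt hj'.2)
            have hB2 : |Sp ω m - Sp ω j| ≤ 2 * u := by
              have h3 : |Sp ω m - Sp ω j| ≤ |Sp ω m| + |Sp ω j| := by
                rw [sub_eq_add_neg]
                exact (abs_add_le _ _).trans (by rw [abs_neg])
              have h4 := hsp m le_rfl
              have h5 := hsp j (le_of_lt hj'.2)
              linarith
            exact mul_le_mul hA hB2 (abs_nonneg _)
              (mul_nonneg (by positivity) (hΔnn j hj'.1 (le_of_lt hj'.2)))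
        _ = (4 * Kd * u) * ∑ j ∈ Finset.Ico 1 m, (t (j + 1) - t j) := by
            rw [Finset.mul_sum]
            apply Finset.sum_congr rfl
            intro j _
            ring
        _ ≤ (4 * Kd * u) * T := by
            apply mul_le_mul_of_nonneg_left _ (by positivity)
            rw [← hΔsum]
            apply Finset.sum_le_sum_of_subset_of_nonneg
              (Finset.Ico_subset_Icc_self)
            intro i hi _
            exact hΔnn i (Finset.mem_Icc.mp hi).1 (Finset.mem_Icc.mp hi).2
        _ = 4 * Kd * T * u := by ring
    have hle1 : d ω 1 * Sp ω m ≤ |d ω 1 * Sp ω m| := le_abs_self _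
    have hle2 : ∑ j ∈ Finset.Ico 1 m, (d ω (j + 1) - d ω j) * (Sp ω m - Sp ω j)
        ≤ |∑ j ∈ Finset.Ico 1 m, (d ω (j + 1) - d ω j) * (Sp ω m - Sp ω j)| := le_abs_self _
    have hCu : C₂ * u = K * Real.sqrt Ssum + e := by
      rw [hu]
      field_simp
    have : (∑ i ∈ Finset.Icc 1 m, (t (i + 1) - t i) * (d ω i) ^ 2) < C₂ * u := by
      rw [hC₂]
      nlinarith
    linarith [hCu ▸ this]
  -- the Fin m indexed weighted noise variables
  set Yp : Fin m → Ω → ℝ :=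
    fun i ω => (t ((i : ℕ) + 1 + 1) - t ((i : ℕ) + 1)) * ε ((i : ℕ) + 1) ω with hYp
  set Yn : Fin m → Ω → ℝ :=
    fun i ω => -((t ((i : ℕ) + 1 + 1) - t ((i : ℕ) + 1)) * ε ((i : ℕ) + 1) ω) with hYn
  have hmemIcc : ∀ i : Fin m, ((i : ℕ) + 1) ∈ Finset.Icc 1 m := by
    intro i
    have := i.isLt
    simp only [Finset.mem_Icc]
    omega
  have hYpmeas : ∀ i, Measurable (Yp i) := fun i =>
    (hεmeas _ (hmemIcc i)).const_mul _
  have hYnmeas : ∀ i, Measurable (Yn i) := fun i =>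
    ((hεmeas _ (hmemIcc i)).const_mul _).neg
  have hYpindep : iIndepFun Yp μ := by
    exact hεindep.comp
      (fun i : Fin m => fun x : ℝ => (t ((i : ℕ) + 1 + 1) - t ((i : ℕ) + 1)) * x)
      (fun i => measurable_id.const_mul _)
  have hYnindep : iIndepFun Yn μ := by
    exact hεindep.comp
      (fun i : Fin m => fun x : ℝ => -((t ((i : ℕ) + 1 + 1) - t ((i : ℕ) + 1)) * x))
      (fun i => (measurable_id.const_mul _).neg)
  have hYpmean : ∀ i, ∫ ω, Yp i ω ∂μ = 0 := by
    intro i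
    simp only [hYp]
    rw [integral_const_mul, hεmean _ (hmemIcc i), mul_zero]
  have hYnmean : ∀ i, ∫ ω, Yn i ω ∂μ = 0 := by
    intro i
    simp only [hYn]
    rw [integral_neg, integral_const_mul, hεmean _ (hmemIcc i), mul_zero, neg_zero]
  set c : Fin m → ℝ := fun i => |t ((i : ℕ) + 1 + 1) - t ((i : ℕ) + 1)| * Mε with hc
  have hcnn : ∀ i, 0 ≤ c i := fun i => by
    simp only [hc]
    positivity
  have hYpb : ∀ i, ∀ᵐ ω ∂μ, |Yp i ω| ≤ c i := by
    intro i
    filter_upwards [hεbd _ (hmemIcc i)] with ω hω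
    simp only [hYp, hc, abs_mul]
    exact mul_le_mul_of_nonneg_left hω (abs_nonneg _)
  have hYnb : ∀ i, ∀ᵐ ω ∂μ, |Yn i ω| ≤ c i := by
    intro i
    filter_upwards [hεbd _ (hmemIcc i)] with ω hω
    simp only [hYn, abs_neg, hc, abs_mul]
    exact mul_le_mul_of_nonneg_left hω (abs_nonneg _)
  have hcsum : ∑ i, (c i) ^ 2 = Mε ^ 2 * Ssum := by
    have h1 : ∀ i : Fin m, (c i) ^ 2
        = (fun n => Mε ^ 2 * (t (n + 1) - t n) ^ 2) ((i : ℕ) + 1) := by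
      intro i
      simp only [hc]
      rw [mul_pow, sq_abs]
      ring
    have h2 : Finset.univ.filter (fun i : Fin m => (i : ℕ) < m) = Finset.univ := by
      apply Finset.filter_true_of_mem
      intro i _
      exact i.isLt
    calc ∑ i, (c i) ^ 2
        = ∑ i ∈ Finset.univ.filter (fun i : Fin m => (i : ℕ) < m),
            (fun n => Mε ^ 2 * (t (n + 1) - t n) ^ 2) ((i : ℕ) + 1) := by
          rw [h2]
          exact Finset.sum_congr rfl (fun i _ => h1 i)
      _ = ∑ i ∈ Finset.Icc 1 m, Mε ^ 2 * (t (i + 1) - t i) ^ 2 :=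
          sum_fin_shift m m le_rfl (fun n => Mε ^ 2 * (t (n + 1) - t n) ^ 2)
      _ = Mε ^ 2 * Ssum := by rw [hSsum, Finset.mul_sum]
  -- partial-sum identities
  have hshiftp : ∀ (ω : Ω) (k : ℕ), k ≤ m →
      (∑ i ∈ Finset.univ.filter (fun i : Fin m => (i : ℕ) < k), Yp i ω) = Sp ω k := by
    intro ω k hk
    have h := sum_fin_shift m k hk (fun n => (t (n + 1) - t n) * ε n ω)
    simp only [hSp]
    rw [← h]
  have hshiftn : ∀ (ω : Ω) (k : ℕ), k ≤ m →
      (∑ i ∈ Finset.univ.filter (fun i : Fin m => (i : ℕ) < k), Yn i ω) = -(Sp ω k) := by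
    intro ω k hk
    have h := sum_fin_shift m k hk (fun n => -((t (n + 1) - t n) * ε n ω))
    simp only [hSp]
    rw [← Finset.sum_neg_distrib, ← h]
  -- inclusion of the bad event into the two maximal events
  have hincl : {ω | (∑ i ∈ Finset.Icc 1 m, (t (i + 1) - t i) *
        (sol (xhat₀ ω) (fhat ω) (t i) - sol x₀star fstar (t i)) ^ 2)
        ≥ K * Real.sqrt Ssum + e} ⊆
      {ω | ∃ k ≤ m, u ≤ ∑ i ∈ Finset.univ.filter (fun i : Fin m => (i : ℕ) < k), Yp i ω} ∪
      {ω | ∃ k ≤ m, u ≤ ∑ i ∈ Finset.univ.filter (fun i : Fin m => (i : ℕ) < k), Yn i ω} := by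
    intro ω hω
    simp only [Set.mem_setOf_eq] at hω
    by_contra hno
    simp only [Set.mem_union, Set.mem_setOf_eq] at hno
    push_neg at hno
    obtain ⟨hno1, hno2⟩ := hno
    have hsmall : ∀ k, k ≤ m → |Sp ω k| < u := by
      intro k hk
      rw [abs_lt]
      constructor
      · have := hno2 k hk
        rw [hshiftn ω k hk] at this
        linarith
      · have := hno1 k hk
        rw [hshiftp ω k hk] at this
        linarith
    have hlt := hpoint ω hsmall
    have heq : (∑ i ∈ Finset.Icc 1 m, (t (i + 1) - t i) *
        (sol (xhat₀ ω) (fhat ω) (t i) - sol x₀star fstar (t i)) ^ 2)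
        = ∑ i ∈ Finset.Icc 1 m, (t (i + 1) - t i) * (d ω i) ^ 2 := by
      simp only [hd]
    rw [heq] at hω
    linarith
  -- apply the maximal inequality
  set l : ℝ := u / (Mε ^ 2 * Ssum) with hl
  have hl0 : 0 ≤ l := le_of_lt (by rw [hl]; positivity)
  have happ1 := maximal_hoeffding μ m Yp hYpmeas hYpindep hYpmean c hcnn hYpb u l hupos hl0
  have happ2 := maximal_hoeffding μ m Yn hYnmeas hYnindep hYnmean c hcnn hYnb u l hupos hl0
  have hEventbound : (μ {ω | (∑ i ∈ Finset.Icc 1 m, (t (i + 1) - t i) *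
        (sol (xhat₀ ω) (fhat ω) (t i) - sol x₀star fstar (t i)) ^ 2)
        ≥ K * Real.sqrt Ssum + e}).toReal ≤
      (μ {ω | ∃ k ≤ m, u ≤ ∑ i ∈ Finset.univ.filter
          (fun i : Fin m => (i : ℕ) < k), Yp i ω}).toReal +
      (μ {ω | ∃ k ≤ m, u ≤ ∑ i ∈ Finset.univ.filter
          (fun i : Fin m => (i : ℕ) < k), Yn i ω}).toReal := by
    have h0 := measure_mono (μ := μ) hincl
    have h1 := h0.trans (measure_union_le (μ := μ) _ _)
    have h2 := ENNReal.toReal_mono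
      (ENNReal.add_ne_top.mpr ⟨measure_ne_top μ _, measure_ne_top μ _⟩) h1
    rwa [ENNReal.toReal_add (measure_ne_top μ _) (measure_ne_top μ _)] at h2
  -- exponent computations
  have hX : (0:ℝ) < Mε ^ 2 * Ssum := by positivity
  have hexpval : l ^ 2 * (∑ i, (c i) ^ 2) / 2 - l * u
      = -(u ^ 2) / (2 * (Mε ^ 2 * Ssum)) := by
    rw [hcsum, hl]
    field_simp
    ring
  have hsq : Real.sqrt Ssum ^ 2 = Ssum := Real.sq_sqrt hSnn
  have huC : u * C₂ = K * Real.sqrt Ssum + e := by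
    rw [hu]
    field_simp
  have hKsq : K ^ 2 = 4 * C₂ ^ 2 * Mε ^ 2 := by rw [hK]; ring
  have hexp2 : -(u ^ 2) / (2 * (Mε ^ 2 * Ssum)) ≤ -2 + -2 * e ^ 2 / (K ^ 2 * Ssum) := by
    have hu2 : u ^ 2 * C₂ ^ 2 = K ^ 2 * Ssum + 2 * (K * Real.sqrt Ssum) * e + e ^ 2 := by
      rw [← mul_pow, huC, add_sq, mul_pow, hsq]
    have hrhs : -2 + -2 * e ^ 2 / (K ^ 2 * Ssum)
        = (-2 * (K ^ 2 * Ssum) + -2 * e ^ 2) / (K ^ 2 * Ssum) := by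
      field_simp
    rw [hrhs, div_le_div_iff₀ (by positivity) (by positivity)]
    rw [← mul_le_mul_iff_left₀ (by positivity : (0:ℝ) < C₂ ^ 2)]
    have hu2KS : u ^ 2 * C₂ ^ 2 * (K ^ 2 * Ssum)
        = (K ^ 2 * Ssum + 2 * (K * Real.sqrt Ssum) * e + e ^ 2) * (K ^ 2 * Ssum) := by
      rw [hu2]
    have hMC : 2 * (Mε ^ 2 * Ssum) * C₂ ^ 2 = (K ^ 2 * Ssum) / 2 := by
      rw [hKsq]
      ring
    have h3 : 0 ≤ (2 * (K * Real.sqrt Ssum) * e) * (K ^ 2 * Ssum) := by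
      have := Real.sqrt_nonneg Ssum
      positivity
    have hLeq : -(u ^ 2) * (K ^ 2 * Ssum) * C₂ ^ 2
        = -((K ^ 2 * Ssum + 2 * (K * Real.sqrt Ssum) * e + e ^ 2) * (K ^ 2 * Ssum)) := by
      rw [← hu2KS]
      ring
    have hReq : (-2 * (K ^ 2 * Ssum) + -2 * e ^ 2) * (2 * (Mε ^ 2 * Ssum)) * C₂ ^ 2
        = (-2 * (K ^ 2 * Ssum) + -2 * e ^ 2) * ((K ^ 2 * Ssum) / 2) := by
      rw [mul_assoc, hMC]
    rw [hLeq, hReq]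
    linarith [h3]
  have hfinal : Real.exp (l ^ 2 * (∑ i, (c i) ^ 2) / 2 - l * u)
      ≤ Real.exp (-2 : ℝ) * Real.exp (-2 * e ^ 2 / (K ^ 2 * Ssum)) := by
    rw [← Real.exp_add]
    apply Real.exp_le_exp.mpr
    rw [hexpval]
    linarith [hexp2]
  have h2exp : Real.exp (-2 : ℝ) ≤ 1 / 2 := by
    rw [Real.exp_neg]
    have h3 : (2:ℝ) ≤ Real.exp 2 := by linarith [Real.add_one_le_exp (2:ℝ)]
    have h4 : (Real.exp 2)⁻¹ ≤ (2:ℝ)⁻¹ :=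
      inv_anti₀ (by norm_num) h3
    linarith
  calc (μ {ω | (∑ i ∈ Finset.Icc 1 m, (t (i + 1) - t i) *
        (sol (xhat₀ ω) (fhat ω) (t i) - sol x₀star fstar (t i)) ^ 2)
        ≥ K * Real.sqrt Ssum + e}).toReal
      ≤ (μ {ω | ∃ k ≤ m, u ≤ ∑ i ∈ Finset.univ.filter
          (fun i : Fin m => (i : ℕ) < k), Yp i ω}).toReal +
        (μ {ω | ∃ k ≤ m, u ≤ ∑ i ∈ Finset.univ.filter
          (fun i : Fin m => (i : ℕ) < k), Yn i ω}).toReal := hEventbound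
    _ ≤ Real.exp (l ^ 2 * (∑ i, (c i) ^ 2) / 2 - l * u)
        + Real.exp (l ^ 2 * (∑ i, (c i) ^ 2) / 2 - l * u) := add_le_add happ1 happ2
    _ ≤ 2 * (Real.exp (-2 : ℝ) * Real.exp (-2 * e ^ 2 / (K ^ 2 * Ssum))) := by
        linarith [hfinal]
    _ ≤ Real.exp (-2 * e ^ 2 / (K ^ 2 * Ssum)) := by
        have h5 := mul_le_mul_of_nonneg_right h2exp
          (le_of_lt (Real.exp_pos (-2 * e ^ 2 / (K ^ 2 * Ssum))))
        linarith
end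

section
/- Under the assumptions of the main consistency theorem, suppose moreover that the m observation times satisfy t_{j+1} − t_j = 1/m for every j (regular sampling). Then, with the same constants K₁, K₂, K₃, K₄ as in that theorem, E[ ∫₀^T ‖x̂(t) − x*(t)‖² dt ] ≤ sqrt(π/(4·K₂))·sqrt(d/m) + K₁·d/sqrt(m) + K₄·d/m + h²·K₃·d. -/
open Real Set MeasureTheory ProbabilityTheory

/-- The Euler iterates `z₀ = x₀`, `z_{l+1} = z_l + h·f(z_l)` in `ℝ^d`. -/
noncomputable def eulerIterE {d : ℕ} (f : EuclideanSpace ℝ (Fin d) → EuclideanSpace ℝ (Fin d))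
    (h : ℝ) (x₀ : EuclideanSpace ℝ (Fin d)) : ℕ → EuclideanSpace ℝ (Fin d)
  | 0 => x₀
  | l + 1 => eulerIterE f h x₀ l + h • f (eulerIterE f h x₀ l)

/-- **Corollary 1 (expected squared L² error under regular sampling).** Under the
assumptions of the main consistency theorem, with regular sampling
`t_{j+1} − t_j = 1/m` and the same constants `K₁, K₂, K₃, K₄` (characterized by
the tail bound of that theorem),
`E[∫₀^T ‖x̂(t) − x*(t)‖² dt] ≤ sqrt(π/(4K₂))·sqrt(d/m) + K₁·d/sqrt(m) + K₄·d/m + h²·K₃·d`. -/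
theorem expected_L2_error_regular_sampling
    (r L M T Mε : ℝ) (hr : 0 < r) (hL : 0 < L) (hM : 0 < M) (hT : 0 < T) (hMε : 0 < Mε)
    (K₁ K₂ K₃ K₄ : ℝ) (hK₁ : 0 < K₁) (hK₂ : 0 < K₂) (hK₃ : 0 < K₃) (hK₄ : 0 < K₄)
    (d : ℕ) (hd : 1 ≤ d)
    (F : Set (EuclideanSpace ℝ (Fin d) → EuclideanSpace ℝ (Fin d)))
    (hF₁ : ∀ f ∈ F, ContDiff ℝ 1 f)
    (hF₂ : ∀ f ∈ F, ∀ u v, ‖f u - f v‖ ≤ L * ‖u - v‖)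
    (hF₃ : ∀ f ∈ F, ‖f 0‖ ≤ M)
    -- step size `h`, grid `s_l = l·h` with `T = kk·h`
    (h : ℝ) (hh : 0 < h) (kk : ℕ) (hkk : 1 ≤ kk) (hTgrid : T = (kk : ℝ) * h)
    -- observation times on the grid, with regular sampling `t_{j+1} − t_j = 1/m`
    (m : ℕ) (hm : 1 ≤ m) (t : ℕ → ℝ) (kj : ℕ → ℕ)
    (hgrid : ∀ j ∈ Finset.Icc 1 m, t j = (kj j : ℝ) * h)
    (ht1 : t 1 = 0) (htmono : ∀ j, 1 ≤ j → j < m → t j < t (j + 1))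
    (htm : t m ≤ T) (htT : t (m + 1) = T)
    (hreg : ∀ j ∈ Finset.Icc 1 m, t (j + 1) - t j = 1 / m)
    -- the true trajectory
    (fstar : EuclideanSpace ℝ (Fin d) → EuclideanSpace ℝ (Fin d)) (hfstar : fstar ∈ F)
    (xstar : ℝ → EuclideanSpace ℝ (Fin d)) (hx0 : ‖xstar 0‖ ≤ r)
    (hxstar : ∀ s ∈ Set.Icc (0 : ℝ) T, HasDerivAt xstar (fstar (xstar s)) s)
    -- the noise: independent, mean-zero, bounded coordinates
    (Ω : Type) (mΩ : MeasurableSpace Ω) (μ : Measure Ω) (hμ : IsProbabilityMeasure μ)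
    (ε : ℕ → Ω → EuclideanSpace ℝ (Fin d))
    (hεmeas : ∀ j ∈ Finset.Icc 1 m, ∀ i : Fin d, Measurable (fun ω => ε j ω i))
    (hεindep : iIndepFun
      (fun p : Fin m × Fin d => fun ω => ε ((p.1 : ℕ) + 1) ω p.2) μ)
    (hεmean : ∀ j ∈ Finset.Icc 1 m, ∀ i : Fin d, ∫ ω, ε j ω i ∂μ = 0)
    (hεbdd : ∀ j ∈ Finset.Icc 1 m, ∀ i : Fin d, ∀ᵐ ω ∂μ, |ε j ω i| ≤ Mε)
    -- the estimator
    (fhat : Ω → EuclideanSpace ℝ (Fin d) → EuclideanSpace ℝ (Fin d))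
    (zhat₀ : Ω → EuclideanSpace ℝ (Fin d))
    (hfhat : ∀ ω, fhat ω ∈ F) (hzhat₀ : ∀ ω, ‖zhat₀ ω‖ ≤ r)
    (hmin : ∀ ω, ∀ f ∈ F, ∀ z₀ : EuclideanSpace ℝ (Fin d), ‖z₀‖ ≤ r →
      (∑ j ∈ Finset.Icc 1 m, (t (j + 1) - t j) *
        ‖(xstar (t j) + ε j ω) - eulerIterE (fhat ω) h (zhat₀ ω) (kj j)‖ ^ 2) ≤
      (∑ j ∈ Finset.Icc 1 m, (t (j + 1) - t j) *
        ‖(xstar (t j) + ε j ω) - eulerIterE f h z₀ (kj j)‖ ^ 2))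
    -- `x̂` is the piecewise linear interpolation of the Euler iterates of `(f̂, ẑ₀)`
    (xhat : Ω → ℝ → EuclideanSpace ℝ (Fin d))
    (hxhat : ∀ ω, ∀ l : ℕ, l < kk → ∀ s ∈ Set.Icc ((l : ℝ) * h) (((l : ℝ) + 1) * h),
      xhat ω s = eulerIterE (fhat ω) h (zhat₀ ω) l +
        ((s - (l : ℝ) * h) / h) •
          (eulerIterE (fhat ω) h (zhat₀ ω) (l + 1) - eulerIterE (fhat ω) h (zhat₀ ω) l))
    (hVmeas : Measurable (fun ω => ∫ s in (0 : ℝ)..T, ‖xhat ω s - xstar s‖ ^ 2))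
    (hVint : Integrable (fun ω => ∫ s in (0 : ℝ)..T, ‖xhat ω s - xstar s‖ ^ 2) μ)
    -- the tail bound of the main theorem, with the constants `K₁, K₂, K₃, K₄`
    (htail : ∀ e > (0 : ℝ),
      (μ {ω | (∫ s in (0 : ℝ)..T, ‖xhat ω s - xstar s‖ ^ 2) ≥
        K₁ * d / Real.sqrt m + h ^ 2 * K₃ * d + K₄ * d / m + e}).toReal ≤
      Real.exp (-K₂ * m * e ^ 2 / d)) :
    (∫ ω, (∫ s in (0 : ℝ)..T, ‖xhat ω s - xstar s‖ ^ 2) ∂μ) ≤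
      Real.sqrt (Real.pi / (4 * K₂)) * Real.sqrt (d / m) +
        K₁ * d / Real.sqrt m + K₄ * d / m + h ^ 2 * K₃ * d := by

  classical
  set V : Ω → ℝ := fun ω => ∫ s in (0 : ℝ)..T, ‖xhat ω s - xstar s‖ ^ 2 with hV
  set A : ℝ := K₁ * d / Real.sqrt m + h ^ 2 * K₃ * d + K₄ * d / m with hA
  have hd' : (0 : ℝ) < d := by exact_mod_cast hd
  have hm' : (0 : ℝ) < m := by exact_mod_cast hm
  set c : ℝ := K₂ * m / d with hc
  have hcpos : 0 < c := by positivity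
  set g : Ω → ℝ := fun ω => max (V ω - A) 0 with hg
  have hgint : Integrable g μ := (hVint.sub (integrable_const A)).pos_part
  have hgnn : 0 ≤ᵐ[μ] g := Filter.Eventually.of_forall (fun ω => le_max_right _ _)
  -- layer cake
  have hlayer : ∫ ω, g ω ∂μ = ∫ e in Set.Ioi (0:ℝ), (μ {ω | e < g ω}).toReal :=
    hgint.integral_eq_integral_meas_lt hgnn
  -- tail bound
  have htail' : ∀ e ∈ Set.Ioi (0:ℝ), (μ {ω | e < g ω}).toReal ≤ Real.exp (-c * e ^ 2) := by
    intro e he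
    have he' : (0:ℝ) < e := he
    have hsub : {ω | e < g ω} ⊆ {ω | V ω ≥ K₁ * d / Real.sqrt m + h ^ 2 * K₃ * d + K₄ * d / m + e} := by
      intro ω hω
      have hω' : e < max (V ω - A) 0 := hω
      simp only [Set.mem_setOf_eq, ge_iff_le]
      rcases lt_max_iff.mp hω' with h1 | h2
      · rw [hA] at h1; linarith
      · linarith
    have h1 : (μ {ω | e < g ω}).toReal ≤ (μ {ω | V ω ≥ K₁ * d / Real.sqrt m + h ^ 2 * K₃ * d + K₄ * d / m + e}).toReal := by
      apply ENNReal.toReal_mono (measure_ne_top μ _) (measure_mono hsub)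
    calc (μ {ω | e < g ω}).toReal ≤ _ := h1
      _ ≤ Real.exp (-K₂ * m * e ^ 2 / d) := htail e he'
      _ = Real.exp (-c * e ^ 2) := by rw [hc]; ring_nf
  -- compare with Gaussian integral
  have hgauss_int : IntegrableOn (fun e : ℝ => Real.exp (-c * e ^ 2)) (Set.Ioi 0) :=
    (integrable_exp_neg_mul_sq hcpos).integrableOn
  have hbound : ∫ ω, g ω ∂μ ≤ ∫ e in Set.Ioi (0:ℝ), Real.exp (-c * e ^ 2) := by
    rw [hlayer]
    apply MeasureTheory.integral_mono_of_nonneg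
    · exact Filter.Eventually.of_forall (fun e => ENNReal.toReal_nonneg)
    · exact hgauss_int
    · filter_upwards [ae_restrict_mem measurableSet_Ioi] with e he
      exact htail' e he
  have hgauss : ∫ e in Set.Ioi (0:ℝ), Real.exp (-c * e ^ 2) = Real.sqrt (Real.pi / c) / 2 :=
    integral_gaussian_Ioi c
  -- √(π/c)/2 = √(π/(4K₂))·√(d/m)
  have hsq : Real.sqrt (Real.pi / c) / 2 = Real.sqrt (Real.pi / (4 * K₂)) * Real.sqrt ((d:ℝ) / m) := by
    rw [← Real.sqrt_mul (by positivity : (0:ℝ) ≤ Real.pi / (4 * K₂))]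
    have h2 : Real.sqrt (4:ℝ) = 2 := by
      rw [show (4:ℝ) = 2^2 by norm_num, Real.sqrt_sq (by norm_num : (0:ℝ) ≤ 2)]
    rw [← h2, ← Real.sqrt_div (by positivity : (0:ℝ) ≤ Real.pi / c)]
    congr 1
    rw [hc]
    field_simp
  -- conclude
  have hVg : ∀ ω, V ω ≤ g ω + A := fun ω => by
    have := le_max_left (V ω - A) 0; linarith [this]
  have hint : ∫ ω, V ω ∂μ ≤ ∫ ω, (g ω + A) ∂μ :=
    integral_mono hVint (hgint.add (integrable_const A)) hVg
  rw [integral_add hgint (integrable_const A), integral_const] at hint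
  simp only [measure_univ, probReal_univ, ENNReal.toReal_one, smul_eq_mul, one_mul] at hint
  have := hbound.trans_eq (hgauss.trans hsq)
  calc (∫ ω, V ω ∂μ) ≤ (∫ ω, g ω ∂μ) + A := hint
    _ ≤ Real.sqrt (Real.pi / (4 * K₂)) * Real.sqrt ((d:ℝ) / m) + A := by linarith
    _ = _ := by rw [hA]; push_cast; ring
end

section
/- Let d, p ≥ 1 and let Φ : ℝ^d → ℝ^{p×d}. Define K(u,v) := Φ(u)ᵀ·Φ(v) ∈ ℝ^{d×d} and d²_{K_ii}(u,v) := K(u,u)_{ii} − 2·K(u,v)_{ii} + K(v,v)_{ii}. Then the following are equivalent: (i) there exists N_K ≥ 0 such that d²_{K_ii}(u,v) ≤ N_K²·‖u − v‖² for all u, v ∈ ℝ^d and all i = 1,…,d; (ii) Φ is Lipschitz with respect to the Frobenius norm, i.e. there exists N ≥ 0 such that ‖Φ(u) − Φ(v)‖_F ≤ N·‖u − v‖ for all u, v ∈ ℝ^d. -/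
/-!
Writing `Φ(u)_{·i}` for the `i`-th column of `Φ(u)`, the kernel distance
`d²_{K_ii}(u,v)` is `‖Φ(u)_{·i} − Φ(v)_{·i}‖²`, a nonnegative number, and summing over `i`
gives `‖Φ(u) − Φ(v)‖_F²`. So a bound `N_K²‖u − v‖²` on each term gives the Lipschitz constant
`√d · N_K`, and conversely each term is at most the sum.
-/

open Matrix

/-- The squared Frobenius norm `‖A‖_F² = Σ_{j,i} A_{ji}²` of a real matrix. -/
def frobeniusNormSq {p d : ℕ} (A : Matrix (Fin p) (Fin d) ℝ) : ℝ :=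
  ∑ j : Fin p, ∑ i : Fin d, (A j i) ^ 2

theorem Matrix.transpose_mul_diag_sub_two_mul_add_eq_sum_sq {m n R : Type*} [Fintype m]
    [CommRing R] (A B : Matrix m n R) (i : n) :
    (Aᵀ * A) i i - 2 * (Aᵀ * B) i i + (Bᵀ * B) i i = ∑ j, (A j i - B j i) ^ 2 := by
  simp only [mul_apply, transpose_apply, Finset.mul_sum, ← Finset.sum_sub_distrib,
    ← Finset.sum_add_distrib]
  exact Finset.sum_congr rfl fun j _ => by ring

theorem frobeniusNormSq_sub_eq_sum_sum_sq {p d : ℕ} (A B : Matrix (Fin p) (Fin d) ℝ) :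
    frobeniusNormSq (A - B) = ∑ i, ∑ j, (A j i - B j i) ^ 2 := by
  rw [frobeniusNormSq, Finset.sum_comm]
  rfl

theorem Real.sqrt_sum_le_sqrt_card_mul {ι : Type*} [Fintype ι] {f : ι → ℝ} {b : ℝ}
    (hb : 0 ≤ b) (hf : ∀ i, f i ≤ b ^ 2) :
    √(∑ i, f i) ≤ √(Fintype.card ι) * b := calc
  √(∑ i, f i) ≤ √(Fintype.card ι * b ^ 2) := by
    gcongr
    simpa using Finset.sum_le_card_nsmul Finset.univ f _ fun i _ => hf i
  _ = √(Fintype.card ι) * b := by rw [Real.sqrt_mul' _ (sq_nonneg b), Real.sqrt_sq hb]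

theorem le_sq_of_sqrt_sum_le {ι : Type*} [Fintype ι] {f : ι → ℝ} {b : ℝ}
    (hf : ∀ i, 0 ≤ f i) (h : √(∑ i, f i) ≤ b) (i : ι) : f i ≤ b ^ 2 :=
  (Finset.single_le_sum (fun i _ => hf i) (Finset.mem_univ i)).trans (Real.sqrt_le_iff.mp h).2

theorem explicit_kernel_regularity_iff_lipschitz_features_general
    (d p : ℕ)
    (Φ : EuclideanSpace ℝ (Fin d) → Matrix (Fin p) (Fin d) ℝ)
    (K : EuclideanSpace ℝ (Fin d) → EuclideanSpace ℝ (Fin d) → Matrix (Fin d) (Fin d) ℝ)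
    (hK : ∀ u v, K u v = (Φ u)ᵀ * Φ v) :
    (∃ NK : ℝ, 0 ≤ NK ∧ ∀ u v : EuclideanSpace ℝ (Fin d), ∀ i : Fin d,
        K u u i i - 2 * K u v i i + K v v i i ≤ NK ^ 2 * ‖u - v‖ ^ 2) ↔
      (∃ N : ℝ, 0 ≤ N ∧ ∀ u v : EuclideanSpace ℝ (Fin d),
        Real.sqrt (frobeniusNormSq (Φ u - Φ v)) ≤ N * ‖u - v‖) := by
  simp only [hK, transpose_mul_diag_sub_two_mul_add_eq_sum_sq, frobeniusNormSq_sub_eq_sum_sum_sq,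
    ← mul_pow]
  constructor
  · rintro ⟨NK, hNK, h⟩
    refine ⟨√d * NK, by positivity, fun u v => ?_⟩
    simpa [mul_assoc] using Real.sqrt_sum_le_sqrt_card_mul (by positivity) (h u v)
  · rintro ⟨N, hN, h⟩
    exact ⟨N, hN, fun u v => le_sq_of_sqrt_sum_le (fun i => by positivity) (h u v)⟩

/-- **Equivalence for explicit kernels (Appendix B.2).** For
`K(u,v) = Φ(u)ᵀΦ(v)` and `d²_{K_ii}(u,v) = K(u,u)_{ii} − 2K(u,v)_{ii} + K(v,v)_{ii}`,
the regularity condition of Lemma 1 holds iff the feature map `Φ` is Lipschitz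
with respect to the Frobenius norm. -/
theorem explicit_kernel_regularity_iff_lipschitz_features
    (d p : ℕ) (hd : 1 ≤ d) (hp : 1 ≤ p)
    (Φ : EuclideanSpace ℝ (Fin d) → Matrix (Fin p) (Fin d) ℝ)
    (K : EuclideanSpace ℝ (Fin d) → EuclideanSpace ℝ (Fin d) → Matrix (Fin d) (Fin d) ℝ)
    (hK : ∀ u v, K u v = (Φ u)ᵀ * Φ v) :
    (∃ NK : ℝ, 0 ≤ NK ∧ ∀ u v : EuclideanSpace ℝ (Fin d), ∀ i : Fin d,
        K u u i i - 2 * K u v i i + K v v i i ≤ NK ^ 2 * ‖u - v‖ ^ 2) ↔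
      (∃ N : ℝ, 0 ≤ N ∧ ∀ u v : EuclideanSpace ℝ (Fin d),
        Real.sqrt (frobeniusNormSq (Φ u - Φ v)) ≤ N * ‖u - v‖) :=
  explicit_kernel_regularity_iff_lipschitz_features_general d p Φ K hK
end

section
/- Let d ≥ 1 and define sinc : ℝ → ℝ by sinc(t) := sin(t)/t for t ≠ 0 and sinc(0) := 1. Then for every x ∈ ℝ^d, 2 − 2·∏_{i=1}^d sinc(x_i) ≤ (d/3)·‖x‖². -/
open Real

/-- The sinc function: `sinc t = sin t / t` for `t ≠ 0`, `sinc 0 = 1`. -/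
noncomputable def sinc (t : ℝ) : ℝ := if t = 0 then 1 else Real.sin t / t

lemma sin_ge_sub_cube (t : ℝ) (ht : 0 ≤ t) : t - t ^ 3 / 6 ≤ Real.sin t := by
  have key : ∀ s : ℝ, 0 ≤ s → 0 ≤ Real.sin s - (s - s ^ 3 / 6) := by
    intro s hs
    have h0 : (fun u : ℝ => Real.sin u - (u - u ^ 3 / 6)) 0 = 0 := by simp
    have hmono : MonotoneOn (fun u : ℝ => Real.sin u - (u - u ^ 3 / 6)) (Set.Ici 0) := by
      apply monotoneOn_of_deriv_nonneg (convex_Ici 0)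
      · exact ((Real.continuous_sin.sub (by continuity)).continuousOn)
      · intro u hu
        exact ((Real.differentiable_sin.sub (by
          exact differentiable_id.sub ((differentiable_id.pow 3).div_const 6))) u).differentiableWithinAt
      · intro u hu
        have hderiv : deriv (fun u : ℝ => Real.sin u - (u - u ^ 3 / 6)) u
            = Real.cos u - (1 - u ^ 2 / 2) := by
          have h1 : HasDerivAt (fun u : ℝ => Real.sin u - (u - u ^ 3 / 6)) (Real.cos u - (1 - 3 * u ^ 2 / 6)) u := by
            have := (Real.hasDerivAt_sin u).sub
              (((hasDerivAt_id u).sub (((hasDerivAt_pow 3 u)).div_const 6)))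
            exact this.congr_deriv (by norm_num)
          rw [h1.deriv]
          ring_nf
        rw [hderiv]
        have := Real.one_sub_sq_div_two_le_cos (x := u)
        linarith
    have := hmono (Set.self_mem_Ici) (Set.mem_Ici.2 hs) hs
    simpa [h0] using this
  linarith [key t ht]

lemma one_sub_sq_div_six_le_sinc (t : ℝ) : 1 - t ^ 2 / 6 ≤ _root_.sinc t := by
  have heven : _root_.sinc (-t) = _root_.sinc t := by
    unfold _root_.sinc
    rcases eq_or_ne t 0 with h | h
    · simp [h]
    · simp [h, neg_eq_zero, Real.sin_neg, neg_div_neg_eq]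
  have main : ∀ s : ℝ, 0 ≤ s → 1 - s ^ 2 / 6 ≤ _root_.sinc s := by
    intro s hs
    rcases eq_or_lt_of_le hs with h | h
    · simp [_root_.sinc, ← h]
    · unfold _root_.sinc
      rw [if_neg (ne_of_gt h), le_div_iff₀ h]
      have := sin_ge_sub_cube s hs
      nlinarith
  rcases le_total 0 t with ht | ht
  · exact main t ht
  · have := main (-t) (by linarith)
    rw [heven] at this
    simpa using this

lemma sinc_le_one (t : ℝ) : |_root_.sinc t| ≤ 1 := by
  unfold _root_.sinc
  rcases eq_or_ne t 0 with h | h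
  · simp [h]
  · rw [if_neg h, abs_div, div_le_one (abs_pos.2 h)]
    exact Real.abs_sin_le_abs

lemma one_sub_prod_le_sum {ι : Type*} (s : Finset ι) (a : ι → ℝ)
    (h : ∀ i ∈ s, |a i| ≤ 1) : 1 - ∏ i ∈ s, a i ≤ ∑ i ∈ s, (1 - a i) := by
  classical
  induction s using Finset.induction_on with
  | empty => simp
  | @insert j s' hj ih =>
    rw [Finset.prod_insert hj, Finset.sum_insert hj]
    have hja := h j (Finset.mem_insert_self j s')
    have hrest : ∀ i ∈ s', |a i| ≤ 1 := fun i hi => h i (Finset.mem_insert_of_mem hi)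
    have hprod : |∏ i ∈ s', a i| ≤ 1 := by
      calc |∏ i ∈ s', a i| = ∏ i ∈ s', |a i| := Finset.abs_prod s' a
      _ ≤ ∏ i ∈ s', (1:ℝ) := Finset.prod_le_prod (fun i _ => abs_nonneg _) hrest
      _ = 1 := by simp
    have ih' := ih hrest
    have h1 : a j ≤ 1 := (abs_le.1 hja).2
    have h2 : ∏ i ∈ s', a i ≤ 1 := (abs_le.1 hprod).2
    nlinarith

/-- **Sinc kernel regularity (Appendix B.3, item 4).** For every `x ∈ ℝ^d`,
`2 − 2·∏ᵢ sinc(xᵢ) ≤ ((d : ℝ) / 3) * ‖x‖ ^ 2`. -/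
theorem sinc_kernel_regularity (d : ℕ) (hd : 1 ≤ d) :
    ∀ x : EuclideanSpace ℝ (Fin d),
      2 - 2 * ∏ i : Fin d, _root_.sinc (x i) ≤ ((d : ℝ) / 3) * ‖x‖ ^ 2 := by
  intro x
  have hnorm : ‖x‖ ^ 2 = ∑ i : Fin d, (x i) ^ 2 := by
    rw [EuclideanSpace.norm_eq, sq_sqrt (Finset.sum_nonneg fun i _ => sq_nonneg _)]
    simp [sq_abs]
  have h1 : 1 - ∏ i : Fin d, _root_.sinc (x i) ≤ ∑ i : Fin d, (1 - _root_.sinc (x i)) :=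
    one_sub_prod_le_sum Finset.univ _ (fun i _ => sinc_le_one _)
  have h2 : ∑ i : Fin d, (1 - _root_.sinc (x i)) ≤ ∑ i : Fin d, (x i) ^ 2 / 6 :=
    Finset.sum_le_sum fun i _ => by linarith [one_sub_sq_div_six_le_sinc (x i)]
  have h3 : ∑ i : Fin d, (x i) ^ 2 / 6 = (∑ i : Fin d, (x i) ^ 2) / 6 := by
    rw [Finset.sum_div]
  have hd' : (1 : ℝ) ≤ (d : ℝ) := by exact_mod_cast hd
  have hsum : (0 : ℝ) ≤ ∑ i : Fin d, (x i) ^ 2 := Finset.sum_nonneg fun i _ => sq_nonneg _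
  rw [hnorm]
  nlinarith
end
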